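/- arXiv:2009.08360 — 6 statements merged into one kernel-verified Lean document; each statement's English description precedes it below -/
import Mathlib

section
/- Fix the SmoothBoost weights as defined in the context, with margin parameter θ ∈ (0,1/2). For every T ≥ 1, the combined hypothesis h = sign(∑_{t=1}^T h_t) (with the convention sign(0) = 1) satisfies êrr(h) ≤ (1/m)·∑_{i=1}^m M_i^{T+1}. -/
/-- SmoothBoost (Claim 3 / Theorem 2 of Servedio): after `T` iterations, the
combined hypothesis `h = sign(∑_{t=1}^T h_t)` (with `sign(0) = 1`) has empirical
error at most `(1/m) ∑_{i=1}^m M_i^{T+1}`. -/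
theorem smoothboost_empirical_error_le
    {X : Type*} (m : ℕ) (hm : 1 ≤ m)
    (x : Fin m → X) (y : Fin m → ℝ) (hy : ∀ i, y i = 1 ∨ y i = -1)
    (γ θ : ℝ) (hγ : γ ∈ Set.Ioo (0 : ℝ) 1) (hθ : θ ∈ Set.Ioo (0 : ℝ) (1/2))
    (h : ℕ → X → ℝ) (hh : ∀ t z, h t z = 1 ∨ h t z = -1)
    (N M : ℕ → Fin m → ℝ)
    (hN0 : ∀ i, N 0 i = 0)
    (hN : ∀ t, 1 ≤ t → ∀ i, N t i = N (t - 1) i + h t (x i) * y i - θ)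
    (hM1 : ∀ i, M 1 i = 1)
    (hM : ∀ t, 1 ≤ t → ∀ i,
      M (t + 1) i = if N t i < 0 then 1 else (1 - γ) ^ (N t i / 2))
    (T : ℕ) (hT : 1 ≤ T)
    (H : X → ℝ)
    (hH : ∀ z, H z = if 0 ≤ ∑ t ∈ Finset.Icc 1 T, h t z then 1 else -1) :
    ((Finset.univ.filter fun i => H (x i) ≠ y i).card : ℝ) / m
      ≤ (1 / m) * ∑ i, M (T + 1) i := by
  have hmpos : (0 : ℝ) < m := by exact_mod_cast hm
  -- Formula for N
  have hNform : ∀ t i, N t i = (∑ s ∈ Finset.Icc 1 t, h s (x i) * y i) - t * θ := by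
    intro t i
    induction t with
    | zero => simp [hN0 i]
    | succ n ih =>
      rw [hN (n + 1) (Nat.le_add_left 1 n) i]
      simp only [Nat.add_sub_cancel]
      rw [ih, Finset.sum_Icc_succ_top (Nat.le_add_left 1 n)]
      push_cast
      ring
  -- M nonneg
  have hMnn : ∀ i, 0 ≤ M (T + 1) i := by
    intro i
    rw [hM T hT i]
    split
    · norm_num
    · exact Real.rpow_nonneg (by linarith [hγ.2]) _
  -- on errors, M = 1
  have hMerr : ∀ i, H (x i) ≠ y i → M (T + 1) i = 1 := by
    intro i hi
    have hsum : (∑ s ∈ Finset.Icc 1 T, h s (x i) * y i) ≤ 0 := by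
      rw [← Finset.sum_mul]
      rcases hy i with hy1 | hy1 <;> rw [hH (x i)] at hi
      · have : ¬ (0 ≤ ∑ t ∈ Finset.Icc 1 T, h t (x i)) := by
          intro hge; rw [if_pos hge] at hi; exact hi hy1.symm
        nlinarith [this, hy1]
      · have : (0 ≤ ∑ t ∈ Finset.Icc 1 T, h t (x i)) := by
          by_contra hge; rw [if_neg hge] at hi; exact hi hy1.symm
        nlinarith
    have hNneg : N T i < 0 := by
      rw [hNform T i]
      have : (1 : ℝ) ≤ T := by exact_mod_cast hT
      nlinarith [hθ.1]
    rw [hM T hT i, if_pos hNneg]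
  -- main inequality
  have key : ((Finset.univ.filter fun i => H (x i) ≠ y i).card : ℝ)
      ≤ ∑ i, M (T + 1) i := by
    calc ((Finset.univ.filter fun i => H (x i) ≠ y i).card : ℝ)
        = ∑ i ∈ Finset.univ.filter (fun i => H (x i) ≠ y i), M (T + 1) i := by
          rw [Finset.sum_congr rfl (fun i hi => hMerr i (Finset.mem_filter.mp hi).2)]
          simp
      _ ≤ ∑ i, M (T + 1) i :=
          Finset.sum_le_sum_of_subset_of_nonneg (Finset.filter_subset _ _)
            (fun i _ _ => hMnn i)
  rw [div_eq_mul_inv, mul_comm, ← one_div]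
  exact mul_le_mul_of_nonneg_left key (by positivity)
end

section
/- Fix the SmoothBoost weights as defined in the context, with margin parameter θ ∈ (0,1/2), and let κ ∈ (0,1). If SmoothBoost's termination condition holds after T iterations, i.e. ∑_{i=1}^m M_i^{T+1} < κm, then the combined hypothesis h = sign(∑_{t=1}^T h_t) (with the convention sign(0) = 1) satisfies êrr(h) < κ. -/
/-- SmoothBoost: if the termination condition `∑_{i=1}^m M_i^{T+1} < κm` holds
after `T` iterations, then the combined hypothesis `h = sign(∑_{t=1}^T h_t)`
(with `sign(0) = 1`) has empirical error less than `κ`. -/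
theorem smoothboost_empirical_error_lt_kappa
    {X : Type*} (m : ℕ) (hm : 1 ≤ m)
    (x : Fin m → X) (y : Fin m → ℝ) (hy : ∀ i, y i = 1 ∨ y i = -1)
    (γ θ κ : ℝ) (hγ : γ ∈ Set.Ioo (0 : ℝ) 1) (hθ : θ ∈ Set.Ioo (0 : ℝ) (1/2))
    (hκ : κ ∈ Set.Ioo (0 : ℝ) 1)
    (h : ℕ → X → ℝ) (hh : ∀ t z, h t z = 1 ∨ h t z = -1)
    (N M : ℕ → Fin m → ℝ)
    (hN0 : ∀ i, N 0 i = 0)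
    (hN : ∀ t, 1 ≤ t → ∀ i, N t i = N (t - 1) i + h t (x i) * y i - θ)
    (hM1 : ∀ i, M 1 i = 1)
    (hM : ∀ t, 1 ≤ t → ∀ i,
      M (t + 1) i = if N t i < 0 then 1 else (1 - γ) ^ (N t i / 2))
    (T : ℕ) (hT : 1 ≤ T)
    (hterm : ∑ i, M (T + 1) i < κ * m)
    (H : X → ℝ)
    (hH : ∀ z, H z = if 0 ≤ ∑ t ∈ Finset.Icc 1 T, h t z then 1 else -1) :
    ((Finset.univ.filter fun i => H (x i) ≠ y i).card : ℝ) / m < κ := by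
  have hm0 : (0:ℝ) < m := by exact_mod_cast hm
  rw [div_lt_iff₀ hm0]
  -- Closed form for N
  have hNform : ∀ t i, N t i = (∑ s ∈ Finset.Icc 1 t, h s (x i) * y i) - t * θ := by
    intro t i
    induction t with
    | zero => simp [hN0]
    | succ n ih =>
      rw [hN (n+1) (by omega) i]
      simp only [Nat.add_sub_cancel]
      rw [ih, Finset.sum_Icc_succ_top (by omega)]
      push_cast
      ring
  -- Misclassified points have M (T+1) i = 1
  have key : ∀ i ∈ Finset.univ.filter fun i => H (x i) ≠ y i, M (T + 1) i = 1 := by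
    intro i hi
    rw [Finset.mem_filter] at hi
    have hmis := hi.2
    have hS : (∑ s ∈ Finset.Icc 1 T, h s (x i) * y i) ≤ 0 := by
      rcases hy i with hy1 | hy1
      · have : ¬ (0 ≤ ∑ t ∈ Finset.Icc 1 T, h t (x i)) := by
          intro hle
          apply hmis
          rw [hH, if_pos hle, hy1]
        simp only [hy1, mul_one]
        linarith [not_le.mp this]
      · by_cases hle : 0 ≤ ∑ t ∈ Finset.Icc 1 T, h t (x i)
        · simp only [hy1, mul_neg_one, Finset.sum_neg_distrib]
          linarith
        · exfalso; apply hmis; rw [hH, if_neg hle, hy1]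
    have hNT : N T i < 0 := by
      rw [hNform T i]
      have : (0:ℝ) < (T:ℝ) * θ := by
        apply mul_pos _ hθ.1
        exact_mod_cast hT
      linarith
    rw [hM T hT i, if_pos hNT]
  -- M is nonnegative
  have hMpos : ∀ i : Fin m, 0 ≤ M (T + 1) i := by
    intro i
    rw [hM T hT i]
    split
    · norm_num
    · exact (Real.rpow_pos_of_pos (by linarith [hγ.2]) _).le
  calc ((Finset.univ.filter fun i => H (x i) ≠ y i).card : ℝ)
      = ∑ i ∈ Finset.univ.filter (fun i => H (x i) ≠ y i), M (T + 1) i := by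
        rw [Finset.sum_congr rfl key]; simp
    _ ≤ ∑ i, M (T + 1) i :=
        Finset.sum_le_sum_of_subset_of_nonneg (Finset.filter_subset _ _)
          (fun i _ _ => hMpos i)
    _ < κ * m := hterm
end

section
/- Fix the SmoothBoost weights as defined in the context, with γ ∈ (0,1/2) and margin parameter θ = γ/(2+γ). Suppose that for every t ∈ {1,…,T} the base classifier h_t is a weak hypothesis with respect to D^t, i.e. ∑_{i: h_t(x_i) ≠ y_i} D_i^t ≤ 1/2 − γ. Then γ · ∑_{t=1}^T ∑_{i=1}^m M_i^t < 2m/(γ·√(1−γ)). -/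
set_option maxHeartbeats 1000000

section SmoothBoostAux

private lemma numS2 (u : ℝ) (hu0 : 0 ≤ u) (hu3 : u ≤ 3/10) :
    0 ≤ 16 + 64*u + 24*u^2 - 152*u^3 - 76*u^4 + 172*u^5 - 32*u^6 - 34*u^7 + 16*u^8 - 2*u^9 := by
  have h3 : u^3 ≤ (3/10:ℝ)^1 * u^2 := by
    calc u^3 = u^1 * u^2 := by ring
      _ ≤ (3/10:ℝ)^1 * u^2 := mul_le_mul_of_nonneg_right (pow_le_pow_left₀ hu0 hu3 1) (sq_nonneg u)
  have h4 : u^4 ≤ (3/10:ℝ)^2 * u^2 := by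
    calc u^4 = u^2 * u^2 := by ring
      _ ≤ (3/10:ℝ)^2 * u^2 := mul_le_mul_of_nonneg_right (pow_le_pow_left₀ hu0 hu3 2) (sq_nonneg u)
  have h6 : u^6 ≤ (3/10:ℝ)^4 * u^2 := by
    calc u^6 = u^4 * u^2 := by ring
      _ ≤ (3/10:ℝ)^4 * u^2 := mul_le_mul_of_nonneg_right (pow_le_pow_left₀ hu0 hu3 4) (sq_nonneg u)
  have h7 : u^7 ≤ (3/10:ℝ)^5 * u^2 := by
    calc u^7 = u^5 * u^2 := by ring
      _ ≤ (3/10:ℝ)^5 * u^2 := mul_le_mul_of_nonneg_right (pow_le_pow_left₀ hu0 hu3 5) (sq_nonneg u)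
  have h9 : u^9 ≤ (3/10:ℝ)^7 * u^2 := by
    calc u^9 = u^7 * u^2 := by ring
      _ ≤ (3/10:ℝ)^7 * u^2 := mul_le_mul_of_nonneg_right (pow_le_pow_left₀ hu0 hu3 7) (sq_nonneg u)
  have h2b : u^2 ≤ (3/10:ℝ) * u := by nlinarith
  nlinarith [h3, h4, h6, h7, h9, h2b, sq_nonneg u, pow_nonneg hu0 5, pow_nonneg hu0 8]

private lemma numS3 (u : ℝ) (hu0 : 0 ≤ u) (hu3 : u ≤ 3/10) :
    0 ≤ 16 + 24*u - 120*u^2 - 128*u^3 + 260*u^4 + 34*u^5 - 268*u^6 + 192*u^7 - 56*u^8 + 6*u^9 := by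
  have h3 : u^3 ≤ (3/10:ℝ)^1 * u^2 := by
    calc u^3 = u^1 * u^2 := by ring
      _ ≤ (3/10:ℝ)^1 * u^2 := mul_le_mul_of_nonneg_right (pow_le_pow_left₀ hu0 hu3 1) (sq_nonneg u)
  have h6 : u^6 ≤ (3/10:ℝ)^4 * u^2 := by
    calc u^6 = u^4 * u^2 := by ring
      _ ≤ (3/10:ℝ)^4 * u^2 := mul_le_mul_of_nonneg_right (pow_le_pow_left₀ hu0 hu3 4) (sq_nonneg u)
  have h8 : u^8 ≤ (3/10:ℝ)^6 * u^2 := by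
    calc u^8 = u^6 * u^2 := by ring
      _ ≤ (3/10:ℝ)^6 * u^2 := mul_le_mul_of_nonneg_right (pow_le_pow_left₀ hu0 hu3 6) (sq_nonneg u)
  have h2b : u^2 ≤ (3/10:ℝ) * u := by nlinarith
  nlinarith [h3, h6, h8, h2b, sq_nonneg u, pow_nonneg hu0 4, pow_nonneg hu0 5, pow_nonneg hu0 7, pow_nonneg hu0 9]

private lemma numS4 (u : ℝ) (hu0 : 0 ≤ u) (hu3 : u ≤ 3/10) :
    0 ≤ 32 + 112*u - 16*u^2 - 328*u^3 - 120*u^4 + 68*u^5 - 236*u^6 + 398*u^7 + 68*u^8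
        - 340*u^9 + 196*u^10 - 46*u^11 + 4*u^12 := by
  have h3 : u^3 ≤ (3/10:ℝ)^1 * u^2 := by
    calc u^3 = u^1 * u^2 := by ring
      _ ≤ (3/10:ℝ)^1 * u^2 := mul_le_mul_of_nonneg_right (pow_le_pow_left₀ hu0 hu3 1) (sq_nonneg u)
  have h4 : u^4 ≤ (3/10:ℝ)^2 * u^2 := by
    calc u^4 = u^2 * u^2 := by ring
      _ ≤ (3/10:ℝ)^2 * u^2 := mul_le_mul_of_nonneg_right (pow_le_pow_left₀ hu0 hu3 2) (sq_nonneg u)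
  have h6 : u^6 ≤ (3/10:ℝ)^4 * u^2 := by
    calc u^6 = u^4 * u^2 := by ring
      _ ≤ (3/10:ℝ)^4 * u^2 := mul_le_mul_of_nonneg_right (pow_le_pow_left₀ hu0 hu3 4) (sq_nonneg u)
  have h9 : u^9 ≤ (3/10:ℝ)^7 * u^2 := by
    calc u^9 = u^7 * u^2 := by ring
      _ ≤ (3/10:ℝ)^7 * u^2 := mul_le_mul_of_nonneg_right (pow_le_pow_left₀ hu0 hu3 7) (sq_nonneg u)
  have h11 : u^11 ≤ (3/10:ℝ)^9 * u^2 := by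
    calc u^11 = u^9 * u^2 := by ring
      _ ≤ (3/10:ℝ)^9 * u^2 := mul_le_mul_of_nonneg_right (pow_le_pow_left₀ hu0 hu3 9) (sq_nonneg u)
  have h2b : u^2 ≤ (3/10:ℝ) * u := by nlinarith
  nlinarith [h3, h4, h6, h9, h11, h2b, sq_nonneg u, pow_nonneg hu0 5, pow_nonneg hu0 7,
    pow_nonneg hu0 8, pow_nonneg hu0 10, pow_nonneg hu0 12]

private lemma numS5 (u : ℝ) (hu0 : 0 ≤ u) (hu3 : u ≤ 3/10) :
    0 ≤ 64 + 40*u - 164*u^2 - 72*u^3 + 292*u^4 - 96*u^5 - 158*u^6 + 165*u^7 - 67*u^8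
        + 13*u^9 - 1*u^10 := by
  have h3 : u^3 ≤ (3/10:ℝ)^1 * u^2 := by
    calc u^3 = u^1 * u^2 := by ring
      _ ≤ (3/10:ℝ)^1 * u^2 := mul_le_mul_of_nonneg_right (pow_le_pow_left₀ hu0 hu3 1) (sq_nonneg u)
  have h5 : u^5 ≤ (3/10:ℝ)^3 * u^2 := by
    calc u^5 = u^3 * u^2 := by ring
      _ ≤ (3/10:ℝ)^3 * u^2 := mul_le_mul_of_nonneg_right (pow_le_pow_left₀ hu0 hu3 3) (sq_nonneg u)
  have h6 : u^6 ≤ (3/10:ℝ)^4 * u^2 := by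
    calc u^6 = u^4 * u^2 := by ring
      _ ≤ (3/10:ℝ)^4 * u^2 := mul_le_mul_of_nonneg_right (pow_le_pow_left₀ hu0 hu3 4) (sq_nonneg u)
  have h8 : u^8 ≤ (3/10:ℝ)^6 * u^2 := by
    calc u^8 = u^6 * u^2 := by ring
      _ ≤ (3/10:ℝ)^6 * u^2 := mul_le_mul_of_nonneg_right (pow_le_pow_left₀ hu0 hu3 6) (sq_nonneg u)
  have h10 : u^10 ≤ (3/10:ℝ)^8 * u^2 := by
    calc u^10 = u^8 * u^2 := by ring
      _ ≤ (3/10:ℝ)^8 * u^2 := mul_le_mul_of_nonneg_right (pow_le_pow_left₀ hu0 hu3 8) (sq_nonneg u)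
  have h2b : u^2 ≤ (3/10:ℝ) * u := by nlinarith
  nlinarith [h3, h5, h6, h8, h10, h2b, sq_nonneg u, pow_nonneg hu0 4, pow_nonneg hu0 7,
    pow_nonneg hu0 9]

private lemma chord_bound (x v : ℝ) (hx0 : 0 < x) (hv0 : 0 ≤ v) (hv1 : v ≤ 1) :
    x ^ v ≤ 1 - v * (1 - x) := by
  have := Real.geom_mean_le_arith_mean2_weighted hv0 (by linarith : (0:ℝ) ≤ 1 - v)
    hx0.le (zero_le_one) (by ring)
  calc x ^ v = x ^ v * 1 ^ (1-v) := by rw [Real.one_rpow]; ring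
    _ ≤ v * x + (1-v) * 1 := this
    _ = 1 - v * (1-x) := by ring

private lemma tangent_bound (x a : ℝ) (hx0 : 0 < x) (ha : 0 ≤ a) :
    1 - a * (1 - x) / x ≤ x ^ a := by
  have hlog : Real.log x ≥ 1 - 1/x := by
    have := Real.log_le_sub_one_of_pos (show (0:ℝ) < 1/x by positivity)
    rw [Real.log_div one_ne_zero hx0.ne', Real.log_one] at this
    nlinarith [this]
  have h1 : a * Real.log x + 1 ≤ Real.exp (a * Real.log x) := Real.add_one_le_exp _
  rw [Real.rpow_def_of_pos hx0, mul_comm (Real.log x) a]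
  have h2 : a * (1 - 1/x) ≤ a * Real.log x := by
    apply mul_le_mul_of_nonneg_left _ ha; linarith
  have : 1 - a * (1-x)/x = a * (1 - 1/x) + 1 := by field_simp; ring
  linarith

private lemma S2lem (B θ K : ℝ) (hB0 : 0 < B) (hB1 : B < 1) (hBh : 1/2 < B^2)
    (hθ : θ = (1-B^2)/(3-B^2)) (hK : K = (1-B^2)*(2-B^2)/2) :
    (1+θ)*(1-θ-K) ≤ (1-θ)*(1-(1+θ)*(1-B))*(1+θ+K) := by
  have hs : (0:ℝ) < 3-B^2 := by nlinarith
  have hnum := numS2 (1-B) (by linarith) (by nlinarith)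
  have hD : (0:ℝ) < 2*(3-B^2)^3 := by positivity
  have key : ((1-θ)*(1-(1+θ)*(1-B))*(1+θ+K) - (1+θ)*(1-θ-K)) * (2*(3-B^2)^3)
      = (1-B) * (16 + 64*(1-B) + 24*(1-B)^2 - 152*(1-B)^3 - 76*(1-B)^4 + 172*(1-B)^5
          - 32*(1-B)^6 - 34*(1-B)^7 + 16*(1-B)^8 - 2*(1-B)^9) := by
    rw [hθ, hK]; field_simp; ring
  nlinarith [key, mul_nonneg (by linarith : (0:ℝ) ≤ 1-B) hnum, hD]

private lemma S3lem (B θ K : ℝ) (hB0 : 0 < B) (hB1 : B < 1) (hBh : 1/2 < B^2)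
    (hθ : θ = (1-B^2)/(3-B^2)) (hK : K = (1-B^2)*(2-B^2)/2) :
    ((1+θ)*(1-B)*(1-θ) + (1-θ-K) - B*(1-θ))*((1+θ)/2)
      ≤ B*(1-θ)*K*(1-(1+θ)*(1-B)) := by
  have hs : (0:ℝ) < 3-B^2 := by nlinarith
  have hnum := numS3 (1-B) (by linarith) (by nlinarith)
  have hD : (0:ℝ) < 4*(3-B^2)^3 := by positivity
  have key : (B*(1-θ)*K*(1-(1+θ)*(1-B)) - ((1+θ)*(1-B)*(1-θ) + (1-θ-K) - B*(1-θ))*((1+θ)/2))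
        * (4*(3-B^2)^3)
      = (1-B) * (16 + 24*(1-B) - 120*(1-B)^2 - 128*(1-B)^3 + 260*(1-B)^4 + 34*(1-B)^5
          - 268*(1-B)^6 + 192*(1-B)^7 - 56*(1-B)^8 + 6*(1-B)^9) := by
    rw [hθ, hK]; field_simp; ring
  nlinarith [key, mul_nonneg (by linarith : (0:ℝ) ≤ 1-B) hnum, hD]

private lemma S4lem (B θ K : ℝ) (hB0 : 0 < B) (hB1 : B < 1) (hBh : 1/2 < B^2)
    (hθ : θ = (1-B^2)/(3-B^2)) (hK : K = (1-B^2)*(2-B^2)/2) :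
    (1+θ)*((1+θ)*(1-B))*(1-(1-(1+θ)*(1-B))/2)*(1-θ)
      + (1+θ)*(1-θ-K)*(1-(1-(1+θ)*(1-B))/2)
      ≤ ((1+θ)/2 + K*(1-(1+θ)*(1-B)))*(1-θ) := by
  have hs : (0:ℝ) < 3-B^2 := by nlinarith
  have hnum := numS4 (1-B) (by linarith) (by nlinarith)
  have hD : (0:ℝ) < 4*(3-B^2)^4 := by positivity
  have key : (((1+θ)/2 + K*(1-(1+θ)*(1-B)))*(1-θ)
        - (1+θ)*((1+θ)*(1-B))*(1-(1-(1+θ)*(1-B))/2)*(1-θ)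
        - (1+θ)*(1-θ-K)*(1-(1-(1+θ)*(1-B))/2)) * (4*(3-B^2)^4)
      = (1-B) * (32 + 112*(1-B) - 16*(1-B)^2 - 328*(1-B)^3 - 120*(1-B)^4 + 68*(1-B)^5
          - 236*(1-B)^6 + 398*(1-B)^7 + 68*(1-B)^8 - 340*(1-B)^9 + 196*(1-B)^10
          - 46*(1-B)^11 + 4*(1-B)^12) := by
    rw [hθ, hK]; field_simp; ring
  nlinarith [key, mul_nonneg (by linarith : (0:ℝ) ≤ 1-B) hnum, hD]

private lemma S5lem (B θ K : ℝ) (hB0 : 0 < B) (hB1 : B < 1) (hBh : 1/2 < B^2)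
    (hθ : θ = (1-B^2)/(3-B^2)) (hK : K = (1-B^2)*(2-B^2)/2) :
    (1-B^2)*B*(1+B)*(1-θ-K) ≤ 2*(2*(1-B^2)-θ-K)*(1-θ) := by
  have hs : (0:ℝ) < 3-B^2 := by nlinarith
  have hnum := numS5 (1-B) (by linarith) (by nlinarith)
  have hD : (0:ℝ) < 2*(3-B^2)^2 := by positivity
  have key : (2*(2*(1-B^2)-θ-K)*(1-θ) - (1-B^2)*B*(1+B)*(1-θ-K)) * (2*(3-B^2)^2)
      = (1-B)^2 * (64 + 40*(1-B) - 164*(1-B)^2 - 72*(1-B)^3 + 292*(1-B)^4 - 96*(1-B)^5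
          - 158*(1-B)^6 + 165*(1-B)^7 - 67*(1-B)^8 + 13*(1-B)^9 - 1*(1-B)^10) := by
    rw [hθ, hK]; field_simp; ring
  nlinarith [key, mul_nonneg (sq_nonneg (1-B)) hnum, hD]

end SmoothBoostAux

-- arithmetic helper lemmas for the per-step inequality
private lemma Hup1 (θ K c q x : ℝ) (hcd : c*(1-q) = 1-θ-K) :
    x*(1-θ) ≤ (0 - c*(x*q)) - (0 - c*x) + K*x := by
  have heq : (0 - c*(x*q)) - (0 - c*x) + K*x = x*(1-θ) := by linear_combination x * hcd
  linarith

private lemma Hup2 (θ K c q v Bb : ℝ) (hv0 : 0 ≤ v) (hv1 : v ≤ 1) (hq1 : q ≤ 1)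
    (hc0 : 0 ≤ c) (hK0 : 0 ≤ K) (hcd : c*(1-q) = 1-θ-K) (hBb : Bb ≤ 1 - v*(1-q)) :
    (1-θ)*v ≤ c*(1-Bb) + K := by
  have h1 : c*Bb ≤ c*(1 - v*(1-q)) := mul_le_mul_of_nonneg_left hBb hc0
  have heq : v*(c*(1-q)) = v*(1-θ-K) := by rw [hcd]
  have hKv : K*v ≤ K*1 := mul_le_mul_of_nonneg_left hv1 hK0
  nlinarith [h1, heq, hKv]

private lemma Hdown1 (θ K c r X : ℝ) (hX : 0 < X) (hP1 : c*(1-r) ≤ r*(1+θ+K)) :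
    (X*r)*(-(1+θ)) ≤ (0 - c*X) - (0 - c*(X*r)) + K*(X*r) := by
  nlinarith [mul_le_mul_of_nonneg_left hP1 hX.le]

private lemma Hdown2a (θ c K a B Ba : ℝ) (hm : B*(1-Ba) ≤ a*(1-B))
    (hE : (1+θ+c)*(1-B) ≤ B) (ha : 0 ≤ a) (hB0 : 0 < B) (hπ : 0 ≤ 1+θ+c)
    (hKBa : 0 ≤ K*Ba) : (1+θ+c)*(1-Ba) ≤ a + K*Ba := by
  have hm2 := mul_le_mul_of_nonneg_left hm hπ
  have h6 : a*((1+θ+c)*(1-B)) ≤ a*B := mul_le_mul_of_nonneg_left hE ha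
  nlinarith [hm2, h6, hB0]

private lemma Hdown2b (θ c K a B Ba : ℝ) (hm : B*(1-Ba) ≤ a*(1-B))
    (hE : B ≤ (1+θ+c)*(1-B)) (hhalf : a ≤ (1+θ)/2) (ha : 0 ≤ a) (hB0 : 0 < B)
    (h1θ : 0 < 1-θ) (hπ : 0 ≤ 1+θ+c) (hK0 : 0 ≤ K)
    (hcub : c*((1-θ)*(1-B)) ≤ 1-θ-K)
    (hS3 : ((1+θ)*(1-B)*(1-θ) + (1-θ-K) - B*(1-θ))*((1+θ)/2)
            ≤ B*(1-θ)*K*(1-(1+θ)*(1-B)))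
    (hrBa : 1-(1+θ)*(1-B) ≤ Ba) :
    (1+θ+c)*(1-Ba) ≤ a + K*Ba := by
  have hE0 : (0:ℝ) ≤ (1+θ+c)*(1-B) - B := by linarith
  have h7 : ((1+θ+c)*(1-B) - B)*a ≤ ((1+θ+c)*(1-B) - B)*((1+θ)/2) :=
    mul_le_mul_of_nonneg_left hhalf hE0
  have h8 : ((1+θ+c)*(1-B) - B)*(1-θ) ≤
      (1+θ)*(1-B)*(1-θ) + (1-θ-K) - B*(1-θ) := by nlinarith [hcub]
  have h8' : (((1+θ+c)*(1-B) - B)*(1-θ))*((1+θ)/2) ≤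
      ((1+θ)*(1-B)*(1-θ) + (1-θ-K) - B*(1-θ))*((1+θ)/2) :=
    mul_le_mul_of_nonneg_right h8 (by linarith)
  have h10 : B*(1-θ)*K*(1-(1+θ)*(1-B)) ≤ B*(1-θ)*K*Ba := by
    have hpos : (0:ℝ) ≤ B*(1-θ)*K := by positivity
    exact mul_le_mul_of_nonneg_left hrBa hpos
  have h7' : (((1+θ+c)*(1-B) - B)*a)*(1-θ) ≤ (((1+θ+c)*(1-B) - B)*((1+θ)/2))*(1-θ) :=
    mul_le_mul_of_nonneg_right h7 h1θ.le
  have h11 : (((1+θ+c)*(1-B) - B)*a)*(1-θ) ≤ B*(1-θ)*K*Ba := by nlinarith [h7', h8', hS3, h10]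
  have hm2 := mul_le_mul_of_nonneg_left hm hπ
  have h12 : (1+θ+c)*(1-Ba)*(B*(1-θ)) ≤ (a + K*Ba)*(B*(1-θ)) := by nlinarith [hm2, h11]
  have hBθ : (0:ℝ) < B*(1-θ) := by positivity
  exact le_of_mul_le_mul_right h12 hBθ

private lemma Hchord2 (r v Ba : ℝ) (hr0 : 0 < r) (hr1 : r < 1) (hv0 : 0 ≤ v) (hv1 : v ≤ 1)
    (h1 : r ≤ Ba*(1-v*(1-r))) : 1 - Ba ≤ (1-r)*(1-v*r) := by
  have hxpos : (0:ℝ) < 1 - v*(1-r) := by nlinarith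
  have hBage : r*(1 + v*(1-r)) ≤ Ba := by nlinarith [h1, sq_nonneg (v*(1-r))]
  nlinarith [hBage]

private lemma HQ2 (θ K c B r : ℝ) (hB0 : 0 < B) (hB1 : B < 1) (hθ0 : 0 < θ) (hθ5 : θ ≤ 1/5)
    (hr0 : 0 < r) (hr1 : r < 1) (hrlo : 1-(1+θ)*(1-B) ≤ r)
    (hc0 : 0 ≤ c) (hK0 : 0 ≤ K) (hcub : c*((1-θ)*(1-B)) ≤ 1-θ-K)
    (hS4 : (1+θ)*((1+θ)*(1-B))*(1-(1-(1+θ)*(1-B))/2)*(1-θ)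
            + (1+θ)*(1-θ-K)*(1-(1-(1+θ)*(1-B))/2)
            ≤ ((1+θ)/2 + K*(1-(1+θ)*(1-B)))*(1-θ)) :
    (1+θ+c)*(1-r)*(1-r/2) ≤ (1+θ)/2 + K*r := by
  have hρ : 1-r ≤ (1+θ)*(1-B) := by linarith
  have hρ0 : (0:ℝ) ≤ 1-r := by linarith
  have hrl2 : 1-r/2 ≤ 1-(1-(1+θ)*(1-B))/2 := by nlinarith [hrlo]
  have hrl20 : (0:ℝ) ≤ 1-r/2 := by linarith
  have hprod2 : (1-r)*(1-r/2) ≤ ((1+θ)*(1-B))*(1-(1-(1+θ)*(1-B))/2) :=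
    mul_le_mul hρ hrl2 hrl20 (by nlinarith)
  have hcρ : c*(((1+θ)*(1-B))*(1-(1-(1+θ)*(1-B))/2))*(1-θ)
      ≤ (1+θ)*(1-θ-K)*(1-(1-(1+θ)*(1-B))/2) := by
    have hfac : (0:ℝ) ≤ (1+θ)*(1-(1-(1+θ)*(1-B))/2) := by nlinarith
    nlinarith [mul_le_mul_of_nonneg_left hcub hfac]
  have hstep : (1+θ+c)*((1-r)*(1-r/2)) ≤
      (1+θ+c)*(((1+θ)*(1-B))*(1-(1-(1+θ)*(1-B))/2)) :=
    mul_le_mul_of_nonneg_left hprod2 (by linarith)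
  have hKr : K*(1-(1+θ)*(1-B)) ≤ K*r := mul_le_mul_of_nonneg_left hrlo hK0
  have h1θ' : (0:ℝ) < 1-θ := by linarith
  have hLHS : ((1+θ+c)*(1-r)*(1-r/2))*(1-θ) ≤ ((1+θ)/2 + K*r)*(1-θ) := by
    nlinarith [hstep, hS4, hcρ, mul_le_mul_of_nonneg_right hKr h1θ'.le]
  exact le_of_mul_le_mul_right hLHS h1θ'

private lemma Hbig (θ K c r v a Ba : ℝ) (hv0 : 0 ≤ v) (hv2 : v ≤ 1/2)
    (hub : 1 - Ba ≤ (1-r)*(1-v*r)) (hπ : 0 ≤ 1+θ+c) (hK0 : 0 ≤ K)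
    (hra : r ≤ Ba) (haeq : a = (1-v)*(1+θ))
    (hQ1 : (1+θ+c)*(1-r) ≤ (1+θ) + K*r)
    (hQ2 : (1+θ+c)*(1-r)*(1-r/2) ≤ (1+θ)/2 + K*r) :
    (1+θ+c)*(1-Ba) ≤ a + K*Ba := by
  have hG0 : (0:ℝ) ≤ ((1+θ) + K*r) - (1+θ+c)*(1-r) := by linarith
  have hGh : (0:ℝ) ≤ ((1+θ)/2 + K*r) - (1+θ+c)*(1-r)*(1-r/2) := by linarith
  have hlin : (1+θ+c)*((1-r)*(1-v*r)) ≤ (1-v)*(1+θ) + K*r := by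
    nlinarith [mul_nonneg (by linarith : (0:ℝ) ≤ 1 - 2*v) hG0,
      mul_nonneg (by linarith : (0:ℝ) ≤ 2*v) hGh]
  have hfin := mul_le_mul_of_nonneg_left hub hπ
  have hKra : K*r ≤ K*Ba := mul_le_mul_of_nonneg_left hra hK0
  nlinarith [hfin, hlin, hKra]

private lemma HP1 (θ K c B r : ℝ) (hθ0 : 0 < θ) (hθ5 : θ ≤ 1/5) (hK0 : 0 ≤ K)
    (hc0 : 0 ≤ c) (hrlo : 1 - (1+θ)*(1-B) ≤ r) (hB1 : B < 1)
    (hcub : c * ((1-θ)*(1-B)) ≤ 1-θ-K)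
    (hS2 : (1+θ)*(1-θ-K) ≤ (1-θ)*(1-(1+θ)*(1-B))*(1+θ+K)) :
    c*(1-r) ≤ r*(1+θ+K) := by
  have h1 : c*(1-r) ≤ c*((1+θ)*(1-B)) :=
    mul_le_mul_of_nonneg_left (by linarith) hc0
  have h2 : (1+θ)*(c*((1-θ)*(1-B))) ≤ (1+θ)*(1-θ-K) :=
    mul_le_mul_of_nonneg_left hcub (by linarith)
  have hpos : (0:ℝ) ≤ (1-θ)*(1+θ+K) := by nlinarith
  have h3 := mul_le_mul_of_nonneg_left hrlo hpos
  have h4 : c*(1-r)*(1-θ) ≤ (1-θ)*r*(1+θ+K) := by nlinarith [h1, h2, hS2, h3]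
  nlinarith [h4]

set_option maxHeartbeats 2000000 in
private lemma smoothboost_step (γ θ B K c : ℝ)
    (hγ0 : 0 < γ) (hγ1 : γ < 1/2)
    (hB0 : 0 < B) (hB2 : B^2 = 1-γ)
    (hθ : θ = γ/(2+γ)) (hK : K = γ*(1+γ)/2)
    (hc : c = (1-θ-K)/(1 - B ^ ((1:ℝ)-θ)))
    (a d : ℝ) (hd : d = 1-θ ∨ d = -(1+θ)) :
    min 1 (B ^ a) * d ≤
      (min (a+d) 0 - c * min 1 (B ^ (a+d))) - (min a 0 - c * min 1 (B ^ a)) + K * min 1 (B ^ a) := by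
  have hB1 : B < 1 := by nlinarith
  have hBh : 1/2 < B^2 := by nlinarith
  have hγB : γ = 1 - B^2 := by linarith
  have hθB : θ = (1-B^2)/(3-B^2) := by rw [hθ, hγB]; ring_nf
  have hKB : K = (1-B^2)*(2-B^2)/2 := by rw [hK, hγB]; ring_nf
  have h2γ : (0:ℝ) < 2+γ := by linarith
  have hθd : θ*(2+γ) = γ := by rw [hθ]; field_simp
  have hθ0 : 0 < θ := by rw [hθ]; positivity
  have hθ5 : θ ≤ 1/5 := by nlinarith [hθd]
  have hK0 : 0 < K := by rw [hK]; nlinarith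
  have hK38 : K ≤ 3/8 := by rw [hK]; nlinarith
  have h1θK : 0 < 1-θ-K := by linarith
  set q : ℝ := B ^ ((1:ℝ)-θ) with hqdef
  have hq0 : 0 < q := Real.rpow_pos_of_pos hB0 _
  have hq1 : q < 1 := Real.rpow_lt_one hB0.le hB1 (by linarith)
  have hqc : q ≤ 1 - (1-θ)*(1-B) := chord_bound B (1-θ) hB0 (by linarith) (by linarith)
  have hc0 : 0 < c := by rw [hc]; exact div_pos h1θK (by linarith)
  have hcd : c * (1-q) = 1-θ-K := by
    rw [hc]; exact div_mul_cancel₀ _ (by linarith : (1:ℝ)-q ≠ 0)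
  have hcub : c * ((1-θ)*(1-B)) ≤ 1-θ-K := by
    calc c * ((1-θ)*(1-B)) ≤ c * (1-q) :=
          mul_le_mul_of_nonneg_left (by linarith) hc0.le
      _ = 1-θ-K := hcd
  set r : ℝ := B ^ ((1:ℝ)+θ) with hrdef
  have hr0 : 0 < r := Real.rpow_pos_of_pos hB0 _
  have hr1 : r < 1 := Real.rpow_lt_one hB0.le hB1 (by linarith)
  have hrlo : 1 - (1+θ)*(1-B) ≤ r := by
    have ht := tangent_bound B θ hB0 hθ0.le
    have hsplit : r = B * B^(θ:ℝ) := by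
      rw [hrdef, Real.rpow_add hB0, Real.rpow_one]
    have htm := mul_le_mul_of_nonneg_left ht hB0.le
    have hfe : B * (1 - θ*(1-B)/B) = B - θ*(1-B) := by field_simp
    rw [hfe] at htm
    rw [hsplit]; linarith [htm]
  have hS2 := S2lem B θ K hB0 hB1 hBh hθB hKB
  have hS3 := S3lem B θ K hB0 hB1 hBh hθB hKB
  have hS4 := S4lem B θ K hB0 hB1 hBh hθB hKB
  have hP1 : c*(1-r) ≤ r*(1+θ+K) :=
    HP1 θ K c B r hθ0 hθ5 hK0.le hc0.le hrlo hB1 hcub hS2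
  clear hθ hK hc hθB hKB hγB hθd hqc hS2 h2γ hγ0 hγ1 hB2 hBh hK38
  rcases hd with hd | hd
  · -- up step, d = 1-θ
    subst hd
    rcases le_or_gt 0 a with ha | ha
    · have hb : (0:ℝ) ≤ a + (1-θ) := by linarith
      have hga : B ^ a ≤ 1 := Real.rpow_le_one hB0.le hB1.le ha
      have hgb : B ^ (a + (1-θ)) ≤ 1 := Real.rpow_le_one hB0.le hB1.le hb
      have hsplit : B ^ (a + (1-θ)) = B ^ a * q := by
        rw [hqdef, ← Real.rpow_add hB0]
      rw [min_eq_right ha, min_eq_right hb, min_eq_right hga, min_eq_right hgb, hsplit]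
      exact Hup1 θ K c q (B^a) hcd
    · rcases le_or_gt 0 (a + (1-θ)) with hb | hb
      · have hga : (1:ℝ) ≤ B ^ a :=
          Real.one_le_rpow_of_pos_of_le_one_of_nonpos hB0 hB1.le ha.le
        have hgb : B ^ (a + (1-θ)) ≤ 1 := Real.rpow_le_one hB0.le hB1.le hb
        rw [min_eq_left hga, min_eq_right hgb, min_eq_left ha.le, min_eq_right hb]
        set v : ℝ := (a + (1-θ))/(1-θ) with hvdef
        have h1θ : (0:ℝ) < 1-θ := by linarith
        have hveq : (1-θ)*v = a + (1-θ) := by rw [hvdef]; field_simp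
        have hv0 : 0 ≤ v := by positivity
        have hv1 : v ≤ 1 := by rw [hvdef, div_le_one h1θ]; linarith
        have hbq : B ^ (a + (1-θ)) = q ^ v := by
          rw [hqdef, ← Real.rpow_mul hB0.le]
          congr 1
          rw [hvdef]; field_simp
        have hchord : B ^ (a + (1-θ)) ≤ 1 - v*(1-q) := by
          rw [hbq]; exact chord_bound q v hq0 hv0 hv1
        have hmain := Hup2 θ K c q v (B^(a+(1-θ))) hv0 hv1 hq1.le hc0.le hK0.le hcd hchord
        linarith [hveq, hmain]
      · have hga : (1:ℝ) ≤ B ^ a :=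
          Real.one_le_rpow_of_pos_of_le_one_of_nonpos hB0 hB1.le ha.le
        have hgb : (1:ℝ) ≤ B ^ (a + (1-θ)) :=
          Real.one_le_rpow_of_pos_of_le_one_of_nonpos hB0 hB1.le hb.le
        rw [min_eq_left hga, min_eq_left hgb, min_eq_left ha.le, min_eq_left hb.le]
        linarith
  · -- down step, d = -(1+θ)
    subst hd
    rcases le_or_gt a 0 with ha | ha
    · have hb : a + -(1+θ) ≤ 0 := by linarith
      have hga : (1:ℝ) ≤ B ^ a :=
        Real.one_le_rpow_of_pos_of_le_one_of_nonpos hB0 hB1.le ha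
      have hgb : (1:ℝ) ≤ B ^ (a + -(1+θ)) :=
        Real.one_le_rpow_of_pos_of_le_one_of_nonpos hB0 hB1.le hb
      rw [min_eq_left hga, min_eq_left hgb, min_eq_left ha, min_eq_left hb]
      linarith
    · have hga : B ^ a ≤ 1 := Real.rpow_le_one hB0.le hB1.le ha.le
      have hBa : (0:ℝ) < B ^ a := Real.rpow_pos_of_pos hB0 _
      rcases le_or_gt 0 (a + -(1+θ)) with hb | hb
      · have hgb : B ^ (a + -(1+θ)) ≤ 1 := Real.rpow_le_one hB0.le hB1.le hb
        have hBb : (0:ℝ) < B ^ (a + -(1+θ)) := Real.rpow_pos_of_pos hB0 _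
        have hsplit : B ^ a = B ^ (a + -(1+θ)) * r := by
          rw [hrdef, ← Real.rpow_add hB0]; ring_nf
        rw [min_eq_right ha.le, min_eq_right hb, min_eq_right hga, min_eq_right hgb, hsplit]
        exact Hdown1 θ K c r _ hBb hP1
      · have hgb : (1:ℝ) ≤ B ^ (a + -(1+θ)) :=
          Real.one_le_rpow_of_pos_of_le_one_of_nonpos hB0 hB1.le hb.le
        rw [min_eq_right ha.le, min_eq_left hb.le, min_eq_right hga, min_eq_left hgb]
        have ha1 : a < 1+θ := by linarith
        have hra : r ≤ B ^ a := by
          rw [hrdef]; exact Real.rpow_le_rpow_of_exponent_ge hB0 hB1.le (by linarith)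
        have Ptarget : (1+θ+c)*(1 - B^a) ≤ a + K * B^a := by
          rcases le_or_gt a ((1+θ)/2) with hhalf | hhalf
          · have htan := tangent_bound B a hB0 ha.le
            have htanm := mul_le_mul_of_nonneg_left htan hB0.le
            have hfe : B * (1 - a*(1-B)/B) = B - a*(1-B) := by field_simp
            rw [hfe] at htanm
            have htan' : B*(1 - B^a) ≤ a*(1-B) := by linarith [htanm]
            rcases le_or_gt ((1+θ+c)*(1-B)) B with hE | hE
            · exact Hdown2a θ c K a B (B^a) htan' hE ha.le hB0 (by linarith)
                (mul_nonneg hK0.le hBa.le)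
            · exact Hdown2b θ c K a B (B^a) htan' hE.le hhalf ha.le hB0 (by linarith)
                (by linarith) hK0.le hcub hS3 (by linarith [hrlo, hra])
          · set v : ℝ := (1+θ-a)/(1+θ) with hvdef
            have h1θ : (0:ℝ) < 1+θ := by linarith
            have hveq : (1+θ)*v = 1+θ-a := by rw [hvdef]; field_simp
            have hv0 : 0 ≤ v := by
              rw [hvdef]; exact div_nonneg (by linarith) h1θ.le
            have hv2 : v ≤ 1/2 := by
              rw [hvdef, div_le_iff₀ h1θ]; linarith
            have hrv : r ^ v ≤ 1 - v*(1-r) := chord_bound r v hr0 hv0 (by linarith)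
            have hprod : B ^ a * r ^ v = r := by
              rw [hrdef, ← Real.rpow_mul hB0.le, ← Real.rpow_add hB0]
              congr 1; linarith [hveq]
            have h1 : r ≤ B^a * (1 - v*(1-r)) := by
              calc r = B^a * r^v := hprod.symm
                _ ≤ B^a * (1 - v*(1-r)) := mul_le_mul_of_nonneg_left hrv hBa.le
            have hub := Hchord2 r v (B^a) hr0 hr1 hv0 (by linarith) h1
            have hQ1 : (1+θ+c)*(1-r) ≤ (1+θ) + K*r := by linarith [hP1]
            have hQ2 := HQ2 θ K c B r hB0 hB1 hθ0 hθ5 hr0 hr1 hrlo hc0.le hK0.le hcub hS4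
            exact Hbig θ K c r v a (B^a) hv0 hv2 hub (by linarith) hK0.le hra
              (by linarith [hveq]) hQ1 hQ2
        linarith [Ptarget]

private noncomputable def phiAux (B c z : ℝ) : ℝ := min z 0 - c * min 1 (B ^ z)

private lemma smoothboost_step' (γ θ B K c : ℝ)
    (hγ0 : 0 < γ) (hγ1 : γ < 1/2)
    (hB0 : 0 < B) (hB2 : B^2 = 1-γ)
    (hθ : θ = γ/(2+γ)) (hK : K = γ*(1+γ)/2)
    (hc : c = (1-θ-K)/(1 - B ^ ((1:ℝ)-θ)))
    (a d : ℝ) (hd : d = 1-θ ∨ d = -(1+θ)) :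
    min 1 (B ^ a) * d ≤ phiAux B c (a+d) - phiAux B c a + K * min 1 (B ^ a) := by
  have := smoothboost_step γ θ B K c hγ0 hγ1 hB0 hB2 hθ hK hc a d hd
  simpa [phiAux] using this

/-- The key inequality of Servedio's correctness proof of SmoothBoost
(Lemmas 4 and 5 of Servedio): with `γ ∈ (0,1/2)` and `θ = γ/(2+γ)`, if each
base classifier `h_t` (`1 ≤ t ≤ T`) is a weak hypothesis w.r.t. the induced
distribution `D^t`, i.e. `∑_{i : h_t(x_i) ≠ y_i} D_i^t ≤ 1/2 − γ`, then
`γ · ∑_{t=1}^T ∑_{i=1}^m M_i^t < 2m/(γ√(1−γ))`. -/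
theorem smoothboost_key_inequality
    {X : Type*} (m : ℕ) (hm : 1 ≤ m)
    (x : Fin m → X) (y : Fin m → ℝ) (hy : ∀ i, y i = 1 ∨ y i = -1)
    (γ θ : ℝ) (hγ : γ ∈ Set.Ioo (0 : ℝ) (1/2)) (hθ : θ = γ / (2 + γ))
    (h : ℕ → X → ℝ) (hh : ∀ t z, h t z = 1 ∨ h t z = -1)
    (N M : ℕ → Fin m → ℝ)
    (hN0 : ∀ i, N 0 i = 0)
    (hN : ∀ t, 1 ≤ t → ∀ i, N t i = N (t - 1) i + h t (x i) * y i - θ)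
    (hM1 : ∀ i, M 1 i = 1)
    (hM : ∀ t, 1 ≤ t → ∀ i,
      M (t + 1) i = if N t i < 0 then 1 else (1 - γ) ^ (N t i / 2))
    (T : ℕ)
    (hweak : ∀ t ∈ Finset.Icc 1 T,
      ∑ i ∈ Finset.univ.filter (fun i => h t (x i) ≠ y i),
          M t i / ∑ j, M t j ≤ 1/2 - γ) :
    γ * ∑ t ∈ Finset.Icc 1 T, ∑ i, M t i < 2 * m / (γ * Real.sqrt (1 - γ)) := by
  obtain ⟨hγ0, hγ1⟩ := hγ
  have h1γ : (0:ℝ) < 1-γ := by linarith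
  set B : ℝ := Real.sqrt (1-γ) with hBdef
  have hB0 : 0 < B := Real.sqrt_pos.2 h1γ
  have hB2 : B^2 = 1-γ := Real.sq_sqrt h1γ.le
  have hB1 : B < 1 := by nlinarith
  have hBh : 1/2 < B^2 := by nlinarith
  set K : ℝ := γ*(1+γ)/2 with hKdef
  set c : ℝ := (1-θ-K)/(1 - B ^ ((1:ℝ)-θ)) with hcdef
  have h2γ : (0:ℝ) < 2+γ := by linarith
  have hθd : θ*(2+γ) = γ := by rw [hθ]; field_simp
  have hθ0 : 0 < θ := by rw [hθ]; positivity
  have hθγ : θ ≤ γ/2 := by nlinarith [hθd]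
  have hθ5 : θ ≤ 1/5 := by nlinarith [hθd]
  have hK0 : 0 < K := by rw [hKdef]; nlinarith
  have hKγ : K ≤ 3*γ/4 := by rw [hKdef]; nlinarith
  have h1θK : 0 < 1-θ-K := by linarith
  have hq1 : B ^ ((1:ℝ)-θ) < 1 := Real.rpow_lt_one hB0.le hB1 (by linarith)
  have hq0 : 0 < B ^ ((1:ℝ)-θ) := Real.rpow_pos_of_pos hB0 _
  have hc0 : 0 < c := by rw [hcdef]; exact div_pos h1θK (by linarith)
  -- the M values are given by the potential weight function
  have hMg : ∀ t, 1 ≤ t → ∀ i, M t i = min 1 (B ^ (N (t-1) i)) := by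
    intro t ht i
    rcases Nat.exists_eq_add_of_le ht with ⟨s, rfl⟩
    rcases Nat.eq_zero_or_pos s with rfl | hs
    · -- t = 1
      simp only [Nat.add_zero, hM1 i, Nat.sub_self, hN0 i]
      rw [Real.rpow_zero]; simp
    · -- t = 1 + s = s + 1 with s ≥ 1
      have h1s : 1 + s = s + 1 := by omega
      rw [h1s, hM s hs i]
      have hidx : s + 1 - 1 = s := by omega
      rw [hidx]
      split_ifs with hneg
      · rw [min_eq_left]
        exact Real.one_le_rpow_of_pos_of_le_one_of_nonpos hB0 hB1.le hneg.le
      · push_neg at hneg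
        rw [min_eq_right (Real.rpow_le_one hB0.le hB1.le hneg)]
        rw [← hB2, ← Real.rpow_natCast B 2, ← Real.rpow_mul hB0.le]
        norm_num
        congr 1
        ring
  -- positivity of the weights
  have hMpos : ∀ t, 1 ≤ t → ∀ i, 0 < M t i := by
    intro t ht i
    rw [hMg t ht i]
    exact lt_min one_pos (Real.rpow_pos_of_pos hB0 _)
  -- per-step inequality
  have hstep : ∀ t, 1 ≤ t → ∀ i : Fin m,
      M t i * (h t (x i) * y i - θ) ≤
        phiAux B c (N t i) - phiAux B c (N (t-1) i) + K * M t i := by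
    intro t ht i
    have hd : h t (x i) * y i - θ = 1-θ ∨ h t (x i) * y i - θ = -(1+θ) := by
      rcases hh t (x i) with h1 | h1 <;> rcases hy i with h2 | h2 <;>
        [left; right; right; left] <;> rw [h1, h2] <;> ring
    have hNt : N t i = N (t-1) i + (h t (x i) * y i - θ) := by
      rw [hN t ht i]; ring
    have := smoothboost_step' γ θ B K c hγ0 hγ1 hB0 hB2 hθ hKdef hcdef
      (N (t-1) i) (h t (x i) * y i - θ) hd
    rw [← hNt] at this
    rw [hMg t ht i]
    exact this
  -- per-example (per i) telescoping bound
  have hsumi : ∀ i : Fin m,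
      ∑ t ∈ Finset.Icc 1 T, M t i * (h t (x i) * y i - θ) <
        c + K * ∑ t ∈ Finset.Icc 1 T, M t i := by
    intro i
    have htel : ∑ t ∈ Finset.Icc 1 T, (phiAux B c (N t i) - phiAux B c (N (t-1) i))
        = phiAux B c (N T i) - phiAux B c (N 0 i) := by
      rw [show Finset.Icc 1 T = Finset.Ico 1 (T+1) by rw [Finset.Ico_add_one_right_eq_Icc]]
      rw [Finset.sum_Ico_eq_sum_range]
      have hre : ∀ k, phiAux B c (N (1+k) i) - phiAux B c (N (1+k-1) i)
          = phiAux B c (N (k+1) i) - phiAux B c (N k i) := by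
        intro k
        have e2 : 1 + k - 1 = k := by omega
        have e1 : 1 + k = k + 1 := by omega
        rw [e2, e1]
      calc ∑ k ∈ Finset.range (T+1-1), (phiAux B c (N (1+k) i) - phiAux B c (N (1+k-1) i))
          = ∑ k ∈ Finset.range T, (phiAux B c (N (k+1) i) - phiAux B c (N k i)) := by
            rw [Nat.add_sub_cancel]; exact Finset.sum_congr rfl (fun k _ => hre k)
        _ = phiAux B c (N T i) - phiAux B c (N 0 i) :=
            Finset.sum_range_sub (fun k => phiAux B c (N k i)) T
    have hΦ0 : phiAux B c (N 0 i) = -c := by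
      rw [hN0 i]; unfold phiAux
      rw [Real.rpow_zero]; simp
    have hΦT : phiAux B c (N T i) < 0 := by
      unfold phiAux
      have h1 : min (N T i) 0 ≤ 0 := min_le_right _ _
      have h2 : 0 < min 1 (B ^ (N T i)) := lt_min one_pos (Real.rpow_pos_of_pos hB0 _)
      nlinarith [mul_pos hc0 h2]
    have hsum1 : ∑ t ∈ Finset.Icc 1 T, M t i * (h t (x i) * y i - θ) ≤
        ∑ t ∈ Finset.Icc 1 T, (phiAux B c (N t i) - phiAux B c (N (t-1) i) + K * M t i) := by
      apply Finset.sum_le_sum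
      intro t ht
      exact hstep t (Finset.mem_Icc.mp ht).1 i
    rw [Finset.sum_add_distrib, htel, hΦ0, ← Finset.mul_sum] at hsum1
    linarith [hΦT]
  -- per-round weak learning bound
  have huniv : (Finset.univ : Finset (Fin m)).Nonempty := by
    have : 0 < m := hm
    exact ⟨⟨0, this⟩, Finset.mem_univ _⟩
  have hsumt : ∀ t ∈ Finset.Icc 1 T,
      (2*γ-θ) * ∑ i, M t i ≤ ∑ i, M t i * (h t (x i) * y i - θ) := by
    intro t ht
    have ht1 : 1 ≤ t := (Finset.mem_Icc.mp ht).1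
    have hS0 : 0 < ∑ j, M t j :=
      Finset.sum_pos (fun i _ => hMpos t ht1 i) huniv
    have hw := hweak t ht
    rw [← Finset.sum_div, div_le_iff₀ hS0] at hw
    have hsplit := Finset.sum_filter_add_sum_filter_not Finset.univ
      (fun i => h t (x i) ≠ y i) (fun i => M t i * (h t (x i) * y i - θ))
    have hsplitM := Finset.sum_filter_add_sum_filter_not Finset.univ
      (fun i => h t (x i) ≠ y i) (fun i => M t i)
    have hbad : ∑ i ∈ Finset.univ.filter (fun i => h t (x i) ≠ y i),
        M t i * (h t (x i) * y i - θ)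
        = ∑ i ∈ Finset.univ.filter (fun i => h t (x i) ≠ y i), M t i * (-1-θ) := by
      apply Finset.sum_congr rfl
      intro i hi
      have hne : h t (x i) ≠ y i := (Finset.mem_filter.mp hi).2
      have hprod : h t (x i) * y i = -1 := by
        rcases hh t (x i) with h1 | h1 <;> rcases hy i with h2 | h2
        · exact absurd (h1.trans h2.symm) hne
        · rw [h1, h2]; ring
        · rw [h1, h2]; ring
        · exact absurd (h1.trans h2.symm) hne
      rw [hprod]
    have hgood : ∑ i ∈ Finset.univ.filter (fun i => ¬(h t (x i) ≠ y i)),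
        M t i * (h t (x i) * y i - θ)
        = ∑ i ∈ Finset.univ.filter (fun i => ¬(h t (x i) ≠ y i)), M t i * (1-θ) := by
      apply Finset.sum_congr rfl
      intro i hi
      have heq : h t (x i) = y i := not_not.mp (Finset.mem_filter.mp hi).2
      have hprod : h t (x i) * y i = 1 := by
        rcases hy i with h2 | h2 <;> rw [heq, h2] <;> ring
      rw [hprod]
    rw [hbad, hgood, ← Finset.sum_mul, ← Finset.sum_mul] at hsplit
    set F := ∑ i ∈ Finset.univ.filter (fun i => h t (x i) ≠ y i), M t i with hF
    set G := ∑ i ∈ Finset.univ.filter (fun i => ¬(h t (x i) ≠ y i)), M t i with hG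
    -- hsplit : F * (-1-θ) + G * (1-θ) = total ; hsplitM : F + G = S
    have hFS : F ≤ (1/2-γ) * ∑ j, M t j := hw
    nlinarith [hsplit, hsplitM, hFS]
  -- combine everything
  set Stot : ℝ := ∑ t ∈ Finset.Icc 1 T, ∑ i, M t i with hStot
  have hStot0 : 0 ≤ Stot := by
    apply Finset.sum_nonneg
    intro t ht
    exact Finset.sum_nonneg (fun i _ => (hMpos t (Finset.mem_Icc.mp ht).1 i).le)
  have hA1 : (2*γ-θ) * Stot ≤ ∑ t ∈ Finset.Icc 1 T, ∑ i, M t i * (h t (x i) * y i - θ) := by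
    rw [hStot, Finset.mul_sum]
    exact Finset.sum_le_sum hsumt
  have hA2 : ∑ t ∈ Finset.Icc 1 T, ∑ i, M t i * (h t (x i) * y i - θ) <
      (m : ℝ) * c + K * Stot := by
    rw [Finset.sum_comm]
    calc ∑ i, ∑ t ∈ Finset.Icc 1 T, M t i * (h t (x i) * y i - θ)
        < ∑ i : Fin m, (c + K * ∑ t ∈ Finset.Icc 1 T, M t i) :=
          Finset.sum_lt_sum_of_nonempty huniv (fun i _ => hsumi i)
      _ = (m : ℝ) * c + K * Stot := by
          rw [Finset.sum_add_distrib, Finset.sum_const, ← Finset.mul_sum,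
            Finset.card_univ, Fintype.card_fin, hStot, Finset.sum_comm]
          simp [nsmul_eq_mul]
    -- done
  have hBig : (2*γ-θ-K) * Stot < (m:ℝ) * c := by nlinarith [hA1, hA2]
  have hD : 0 < 2*γ-θ-K := by linarith
  -- the final scalar inequality : γ^2 * B * c ≤ 2*(2γ-θ-K)
  have hθB : θ = (1-B^2)/(3-B^2) := by rw [hθ]; rw [show γ = 1-B^2 by linarith]; ring_nf
  have hKB : K = (1-B^2)*(2-B^2)/2 := by rw [hKdef]; rw [show γ = 1-B^2 by linarith]; ring_nf
  have hS5 := S5lem B θ K hB0 hB1 hBh hθB hKB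
  have hqc : B ^ ((1:ℝ)-θ) ≤ 1 - (1-θ)*(1-B) :=
    chord_bound B (1-θ) hB0 (by linarith) (by linarith)
  have hcd : c * (1 - B ^ ((1:ℝ)-θ)) = 1-θ-K := by
    rw [hcdef]; exact div_mul_cancel₀ _ (by linarith : (1:ℝ) - B ^ ((1:ℝ)-θ) ≠ 0)
  have hcub : c * ((1-θ)*(1-B)) ≤ 1-θ-K := by
    calc c * ((1-θ)*(1-B)) ≤ c * (1 - B ^ ((1:ℝ)-θ)) :=
          mul_le_mul_of_nonneg_left (by linarith) hc0.le
      _ = 1-θ-K := hcd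
  have hfin : γ^2 * B * c ≤ 2*(2*γ-θ-K) := by
    have hBB : (1-B)*(1+B) = γ := by nlinarith [hB2]
    have h1 : γ*B*(1+B)*(c*((1-θ)*(1-B))) ≤ γ*B*(1+B)*(1-θ-K) := by
      apply mul_le_mul_of_nonneg_left hcub (by positivity)
    have h2 : γ*B*(1+B)*(1-θ-K) ≤ 2*(2*γ-θ-K)*(1-θ) := by
      have : (1-B^2) = γ := by linarith
      calc γ*B*(1+B)*(1-θ-K) = (1-B^2)*B*(1+B)*(1-θ-K) := by rw [this]
        _ ≤ 2*(2*(1-B^2)-θ-K)*(1-θ) := hS5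
        _ = 2*(2*γ-θ-K)*(1-θ) := by rw [this]
    -- γ*B*(1+B)*c*(1-θ)*(1-B) = γ^2*B*c*(1-θ)  using (1-B)(1+B) = γ
    have heq : γ^2*B*c*(1-θ) = γ*B*(1+B)*(c*((1-θ)*(1-B))) := by
      linear_combination (-(γ*B*c*(1-θ))) * hBB
    have h3 : γ^2*B*c*(1-θ) ≤ 2*(2*γ-θ-K)*(1-θ) := by
      rw [heq]; linarith [h1, h2]
    have h1θ : (0:ℝ) < 1-θ := by linarith
    exact le_of_mul_le_mul_right h3 h1θ
  -- conclude
  rw [lt_div_iff₀ (by positivity : (0:ℝ) < γ * B)]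
  have hchain : (γ^2*B)*((2*γ-θ-K)*Stot) < (γ^2*B)*((m:ℝ)*c) :=
    mul_lt_mul_of_pos_left hBig (by positivity)
  have hm0 : (0:ℝ) ≤ (m:ℝ) := Nat.cast_nonneg m
  have hc2 : (γ^2*B)*((m:ℝ)*c) ≤ (2*(m:ℝ))*(2*γ-θ-K) := by
    have := mul_le_mul_of_nonneg_left hfin hm0
    nlinarith [this]
  have hfinal : (γ * Stot * (γ*B)) * (2*γ-θ-K) < (2*(m:ℝ)) * (2*γ-θ-K) := by
    nlinarith [hchain, hc2]
  have := lt_of_mul_lt_mul_right hfinal hD.le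
  linarith [this]
end

section
/- Fix the SmoothBoost weights as defined in the context, with γ ∈ (0,1/2), margin parameter θ = γ/(2+γ), and κ ∈ (0,1). Suppose that for every t ∈ {1,…,T}: (a) ∑_{i: h_t(x_i) ≠ y_i} D_i^t ≤ 1/2 − γ (the weak-learning condition), and (b) ∑_{i=1}^m M_i^t ≥ κm (the non-termination condition). Then T < 2/(κ·γ²·√(1−γ)). -/
/-!
Put `L = -log (1 - γ) / 2`, so that the SmoothBoost weight of an example with margin `n` is
`w(n) = exp (-L · max n 0)`, and use the potential `Φ(n) = w(n) + L · max (-n) 0`. A step `s`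
changes the potential by at most `(e^{-Ls} - 1) · w(n)`. Under the weak-learning condition the
`w`-average of `e^{-Ls}` over a round is at most `1 - γ²/2`: the wrong-answer factor is
`e^{L(1+θ)}`, bounded by Bernoulli's inequality, and the right-answer factor is `(1 - γ)` times it.
So every round lowers `∑ᵢ Φ(Nᵢ)` by at least `γ²/2 · ∑ᵢ Mᵢ ≥ γ²κm/2`; the total potential starts
at `m` and stays positive, whence `T · γ²κ/2 < 1`.
-/

open Real Finset

noncomputable def smoothWeight (L n : ℝ) : ℝ := exp (-(L * max n 0))

noncomputable def smoothPotential (L n : ℝ) : ℝ := smoothWeight L n + L * max (-n) 0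

section Potential

variable {L : ℝ}

theorem smoothPotential_pos (hL : 0 ≤ L) (n : ℝ) : 0 < smoothPotential L n :=
  add_pos_of_pos_of_nonneg (exp_pos _) (mul_nonneg hL (le_max_right _ _))

theorem smoothPotential_zero : smoothPotential L 0 = 1 := by
  simp [smoothPotential, smoothWeight]

theorem smoothPotential_of_nonneg {n : ℝ} (hn : 0 ≤ n) : smoothPotential L n = exp (-(L * n)) := by
  simp [smoothPotential, smoothWeight, hn]

theorem smoothPotential_of_nonpos {n : ℝ} (hn : n ≤ 0) : smoothPotential L n = 1 - L * n := by
  simp [smoothPotential, smoothWeight, hn, sub_eq_add_neg]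

theorem smoothPotential_le_exp (n : ℝ) : smoothPotential L n ≤ exp (-(L * n)) := by
  rcases le_total 0 n with hn | hn
  · exact (smoothPotential_of_nonneg hn).le
  · rw [smoothPotential_of_nonpos hn]
    linarith [add_one_le_exp (-(L * n))]

theorem smoothPotential_add_le (hL : 0 ≤ L) (n s : ℝ) :
    smoothPotential L (n + s) ≤
      smoothPotential L n + (exp (-(L * s)) - 1) * smoothWeight L n := by
  rcases le_total 0 n with hn | hn
  · have hw : smoothWeight L n = exp (-(L * n)) := by simp [smoothWeight, hn]
    calc smoothPotential L (n + s) ≤ exp (-(L * (n + s))) := smoothPotential_le_exp _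
      _ = _ := by rw [smoothPotential_of_nonneg hn, hw, mul_add, neg_add, exp_add]; ring
  · have hw : smoothWeight L n = 1 := by simp [smoothWeight, hn]
    rw [smoothPotential_of_nonpos hn, hw]
    rcases le_total (n + s) 0 with hns | hns
    · rw [smoothPotential_of_nonpos hns]
      linarith [add_one_le_exp (-(L * s))]
    · -- with `u = -L n` and `v = L (n + s)` this reads `e^{-v} (1 - e^{-u}) ≤ u`
      have hv : exp (-(L * (n + s))) ≤ 1 := exp_le_one_iff.2 (by nlinarith)
      have hu : exp (L * n) ≤ 1 := exp_le_one_iff.2 (by nlinarith)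
      have hsplit : exp (-(L * s)) = exp (-(L * (n + s))) * exp (L * n) := by
        rw [← exp_add]; ring_nf
      rw [smoothPotential_of_nonneg hns, hsplit]
      nlinarith [exp_pos (-(L * (n + s))), add_one_le_exp (L * n)]

end Potential

theorem sum_ite_mul_le {ι : Type*} (s : Finset ι) (P : ι → Prop) [DecidablePred P] (w : ι → ℝ)
    {a b p : ℝ} (hab : a ≤ b) (hP : ∑ i ∈ s with P i, w i ≤ p * ∑ i ∈ s, w i) :
    ∑ i ∈ s, (if P i then b else a) * w i ≤ ((1 - p) * a + p * b) * ∑ i ∈ s, w i := by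
  rw [← sum_filter_add_sum_filter_not s P w] at hP ⊢
  simp only [ite_mul, sum_ite, ← mul_sum]
  nlinarith [mul_le_mul_of_nonneg_left hP (sub_nonneg.2 hab)]

theorem exp_step_average_le {γ θ L : ℝ} (hγ0 : 0 < γ) (hγ1 : γ < 1 / 2) (hθ : θ = γ / (2 + γ))
    (hL : exp (-(2 * L)) = 1 - γ) :
    exp (-(L * (1 - θ))) * (1 / 2 + γ) + exp (-(L * (-1 - θ))) * (1 / 2 - γ) ≤
      1 - γ ^ 2 / 2 := by
  have hθ0 : 0 ≤ θ := by rw [hθ]; positivity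
  have hθ1 : θ ≤ 1 := by rw [hθ, div_le_one (by linarith)]; linarith
  have hBernoulli : exp (-(L * (-1 - θ))) ≤ (1 + θ) / 2 * exp (2 * L) + (1 - (1 + θ) / 2) := by
    have := convexOn_exp.2 (Set.mem_univ (2 * L)) (Set.mem_univ 0) (by linarith) (by linarith)
      (add_sub_cancel ((1 + θ) / 2) 1)
    simp only [smul_eq_mul, mul_zero, add_zero, exp_zero, mul_one] at this
    rwa [show -(L * (-1 - θ)) = (1 + θ) / 2 * (2 * L) by ring]
  have hBernoulli_eq :
      (1 + θ) / 2 * exp (2 * L) + (1 - (1 + θ) / 2) = 2 / ((2 + γ) * (1 - γ)) := by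
    have : 1 - γ ≠ 0 := by linarith
    rw [show 2 * L = -(-(2 * L)) by ring, exp_neg, hL, hθ]
    field_simp
    ring
  have hright : exp (-(L * (1 - θ))) = exp (-(L * (-1 - θ))) * (1 - γ) := by
    rw [← hL, ← exp_add]; ring_nf
  have hpoly : 2 / ((2 + γ) * (1 - γ)) * (1 - γ / 2 - γ ^ 2) ≤ 1 - γ ^ 2 / 2 := by
    rw [div_mul_eq_mul_div, div_le_iff₀ (by nlinarith)]
    nlinarith [pow_pos hγ0 3, pow_pos hγ0 4]
  rw [hright]
  nlinarith [mul_le_mul_of_nonneg_right hBernoulli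
    (by nlinarith : (0 : ℝ) ≤ 1 - γ / 2 - γ ^ 2)]

theorem sum_smoothPotential_round_le {ι : Type*} (s : Finset ι) {γ θ L : ℝ} (hγ0 : 0 < γ)
    (hγ1 : γ < 1 / 2) (hθ : θ = γ / (2 + γ)) (hL : exp (-(2 * L)) = 1 - γ) (n : ι → ℝ)
    (wrong : ι → Prop) [DecidablePred wrong]
    (hwrong : ∑ i ∈ s with wrong i, smoothWeight L (n i) ≤
      (1 / 2 - γ) * ∑ i ∈ s, smoothWeight L (n i)) :
    ∑ i ∈ s, smoothPotential L (n i + if wrong i then -1 - θ else 1 - θ) ≤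
      ∑ i ∈ s, smoothPotential L (n i) - γ ^ 2 / 2 * ∑ i ∈ s, smoothWeight L (n i) := by
  have hL0 : 0 ≤ L := by
    have := exp_le_one_iff.1 (hL.trans_le (by linarith)); linarith
  have hθ1 : θ < 1 := by rw [hθ, div_lt_one (by linarith)]; linarith
  have hS : 0 ≤ ∑ i ∈ s, smoothWeight L (n i) := sum_nonneg fun i _ => (exp_pos _).le
  have hab : exp (-(L * (1 - θ))) - 1 ≤ exp (-(L * (-1 - θ))) - 1 := by
    gcongr; nlinarith
  have hdrift := mul_le_mul_of_nonneg_right (exp_step_average_le hγ0 hγ1 hθ hL) hS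
  calc ∑ i ∈ s, smoothPotential L (n i + if wrong i then -1 - θ else 1 - θ)
      ≤ ∑ i ∈ s, (smoothPotential L (n i) +
          (exp (-(L * if wrong i then -1 - θ else 1 - θ)) - 1) * smoothWeight L (n i)) :=
        sum_le_sum fun i _ => smoothPotential_add_le hL0 _ _
    _ = ∑ i ∈ s, smoothPotential L (n i) + ∑ i ∈ s, (if wrong i then exp (-(L * (-1 - θ))) - 1
          else exp (-(L * (1 - θ))) - 1) * smoothWeight L (n i) := by
        rw [sum_add_distrib]
        congr 1
        refine sum_congr rfl fun i _ => ?_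
        split_ifs <;> rfl
    _ ≤ ∑ i ∈ s, smoothPotential L (n i) + ((1 - (1 / 2 - γ)) * (exp (-(L * (1 - θ))) - 1)
          + (1 / 2 - γ) * (exp (-(L * (-1 - θ))) - 1)) * ∑ i ∈ s, smoothWeight L (n i) :=
        add_le_add le_rfl (sum_ite_mul_le s wrong _ hab hwrong)
    _ ≤ _ := by linarith

theorem le_sub_mul_of_forall_lt_le_sub {u : ℕ → ℝ} {c : ℝ} {T : ℕ}
    (h : ∀ t < T, u (t + 1) ≤ u t - c) : u T ≤ u 0 - T * c := by
  induction T with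
  | zero => simp
  | succ T ih =>
    have hlast := h T (Nat.lt_succ_self T)
    have hprev := ih fun t ht => h t (Nat.lt_succ_of_lt ht)
    push_cast
    linarith

theorem sum_smoothPotential_le {ι : Type*} [Fintype ι] {γ θ L c : ℝ} {T : ℕ} (hγ0 : 0 < γ)
    (hγ1 : γ < 1 / 2) (hθ : θ = γ / (2 + γ)) (hL : exp (-(2 * L)) = 1 - γ) (n : ℕ → ι → ℝ)
    (wrong : ℕ → ι → Prop) [∀ t, DecidablePred (wrong t)] (hn0 : ∀ i, n 0 i = 0)
    (hn : ∀ t i, n (t + 1) i = n t i + if wrong t i then -1 - θ else 1 - θ)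
    (hweak : ∀ t < T, ∑ i with wrong t i, smoothWeight L (n t i) ≤
      (1 / 2 - γ) * ∑ i, smoothWeight L (n t i))
    (hmass : ∀ t < T, c ≤ ∑ i, smoothWeight L (n t i)) :
    ∑ i, smoothPotential L (n T i) ≤ Fintype.card ι - T * (γ ^ 2 / 2 * c) := by
  have hround : ∀ t < T, ∑ i, smoothPotential L (n (t + 1) i) ≤
      ∑ i, smoothPotential L (n t i) - γ ^ 2 / 2 * c := by
    intro t ht
    simp only [hn]
    have := sum_smoothPotential_round_le univ hγ0 hγ1 hθ hL (n t) (wrong t) (hweak t ht)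
    nlinarith [hmass t ht]
  simpa [hn0, smoothPotential_zero] using
    le_sub_mul_of_forall_lt_le_sub (u := fun t => ∑ i, smoothPotential L (n t i)) hround

theorem ite_rpow_half_eq_smoothWeight {b : ℝ} (hb : 0 < b) (n : ℝ) :
    (if n < 0 then 1 else b ^ (n / 2)) = smoothWeight (-log b / 2) n := by
  unfold smoothWeight
  split_ifs with hn
  · simp [max_eq_right hn.le]
  · rw [max_eq_left (not_lt.1 hn), rpow_def_of_pos hb]
    ring_nf

theorem smoothBoost_weight_eq {ι : Type*} {b : ℝ} (hb : 0 < b) (N M : ℕ → ι → ℝ)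
    (hN0 : ∀ i, N 0 i = 0) (hM1 : ∀ i, M 1 i = 1)
    (hM : ∀ t, 1 ≤ t → ∀ i, M (t + 1) i = if N t i < 0 then 1 else b ^ (N t i / 2)) :
    ∀ t i, M (t + 1) i = smoothWeight (-log b / 2) (N t i)
  | 0, i => by simp [hM1, hN0, smoothWeight]
  | t + 1, i => by rw [hM (t + 1) (by omega), ite_rpow_half_eq_smoothWeight hb]

theorem mul_eq_ite_ne {a b : ℝ} (ha : a = 1 ∨ a = -1) (hb : b = 1 ∨ b = -1) :
    a * b = if a ≠ b then -1 else 1 := by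
  rcases ha with rfl | rfl <;> rcases hb with rfl | rfl <;> norm_num

/-- Bound on the number of iterations of SmoothBoost (Claim 2 / Theorem 3 of
Servedio): with `γ ∈ (0,1/2)`, `θ = γ/(2+γ)` and `κ ∈ (0,1)`, if for every
`t ∈ {1,…,T}` the weak-learning condition `∑_{i : h_t(x_i) ≠ y_i} D_i^t ≤ 1/2 − γ`
and the non-termination condition `∑_{i=1}^m M_i^t ≥ κm` hold, then
`T < 2/(κγ²√(1−γ))`. -/
theorem smoothboost_iteration_bound
    {X : Type*} (m : ℕ) (hm : 1 ≤ m)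
    (x : Fin m → X) (y : Fin m → ℝ) (hy : ∀ i, y i = 1 ∨ y i = -1)
    (γ θ κ : ℝ) (hγ : γ ∈ Set.Ioo (0 : ℝ) (1/2)) (hθ : θ = γ / (2 + γ))
    (hκ : κ ∈ Set.Ioo (0 : ℝ) 1)
    (h : ℕ → X → ℝ) (hh : ∀ t z, h t z = 1 ∨ h t z = -1)
    (N M : ℕ → Fin m → ℝ)
    (hN0 : ∀ i, N 0 i = 0)
    (hN : ∀ t, 1 ≤ t → ∀ i, N t i = N (t - 1) i + h t (x i) * y i - θ)
    (hM1 : ∀ i, M 1 i = 1)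
    (hM : ∀ t, 1 ≤ t → ∀ i,
      M (t + 1) i = if N t i < 0 then 1 else (1 - γ) ^ (N t i / 2))
    (T : ℕ)
    (hweak : ∀ t ∈ Finset.Icc 1 T,
      ∑ i ∈ Finset.univ.filter (fun i => h t (x i) ≠ y i),
          M t i / ∑ j, M t j ≤ 1/2 - γ)
    (hnoterm : ∀ t ∈ Finset.Icc 1 T, κ * m ≤ ∑ i, M t i) :
    (T : ℝ) < 2 / (κ * γ^2 * Real.sqrt (1 - γ)) := by
  obtain ⟨hγ0, hγ1⟩ := hγ
  have hκm : 0 < κ * m := mul_pos hκ.1 (by exact_mod_cast hm)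
  set L := -log (1 - γ) / 2
  have hL : exp (-(2 * L)) = 1 - γ := by
    rw [show -(2 * L) = log (1 - γ) by ring, exp_log (by linarith)]
  have hL0 : 0 ≤ L := by
    have := exp_le_one_iff.1 (hL.trans_le (by linarith)); linarith
  have hweight := smoothBoost_weight_eq (by linarith) N M hN0 hM1 hM
  have hstep : ∀ t i, N (t + 1) i = N t i + if h (t + 1) (x i) ≠ y i then -1 - θ else 1 - θ := by
    intro t i
    rw [hN (t + 1) (by omega), mul_eq_ite_ne (hh _ _) (hy i)]
    split_ifs <;> simp only [Nat.add_sub_cancel] <;> ring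
  have hdecay := sum_smoothPotential_le (c := κ * m) (T := T) hγ0 hγ1 hθ hL N
    (fun t i => h (t + 1) (x i) ≠ y i) hN0 hstep
    (fun t ht => by
      have htT : t + 1 ∈ Icc 1 T := mem_Icc.2 ⟨by omega, by omega⟩
      have hwrong := hweak (t + 1) htT
      rw [← sum_div, div_le_iff₀ (hκm.trans_le (hnoterm (t + 1) htT))] at hwrong
      simpa only [hweight] using hwrong)
    (fun t ht => by
      simpa only [hweight] using hnoterm (t + 1) (mem_Icc.2 ⟨by omega, by omega⟩))
  rw [Fintype.card_fin] at hdecay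
  have hpos : 0 < ∑ i, smoothPotential L (N T i) :=
    sum_pos (fun i _ => smoothPotential_pos hL0 _) (univ_nonempty_iff.2 ⟨⟨0, hm⟩⟩)
  have hT : (T : ℝ) * (κ * γ ^ 2) < 2 :=
    lt_of_mul_lt_mul_right (by nlinarith) (Nat.cast_nonneg m)
  have hκγ : 0 < κ * γ ^ 2 := by have := hκ.1; positivity
  calc (T : ℝ) < 2 / (κ * γ ^ 2) := by rwa [lt_div_iff₀ hκγ]
    _ ≤ 2 / (κ * γ ^ 2 * sqrt (1 - γ)) :=
      div_le_div_of_nonneg_left zero_le_two (mul_pos hκγ (sqrt_pos.2 (by linarith)))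
        (mul_le_of_le_one_right hκγ.le (sqrt_le_one.2 (by linarith)))
end

section
/- There is a universal constant C > 0 such that the following holds. Let X be a set, H a class of functions h : X → {−1,1} of VC dimension d ≥ 1, and T ≥ 1 with Td ≥ 3. Define H_strong = { x ↦ sign(∑_{i=1}^T h_i(x)) : h_1,…,h_T ∈ H } (with the convention sign(0) = 1). Then the VC dimension of H_strong is at most C · T·d · log(T·d). -/
/-- A finite set `S` of points is shattered by a class `F` of `±1`-valued
functions if every `±1`-labeling of `S` is realized by some member of `F`. -/
def Shatters {X : Type*} (F : Set (X → ℝ)) (S : Finset X) : Prop :=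
  ∀ ℓ : X → ℝ, (∀ a ∈ S, ℓ a = 1 ∨ ℓ a = -1) → ∃ h ∈ F, ∀ a ∈ S, h a = ℓ a

universe u

lemma log_le_div_e {x : ℝ} (hx : 0 < x) : Real.log x ≤ x / Real.exp 1 := by
  have h := Real.log_le_sub_one_of_pos (x := x / Real.exp 1) (by positivity)
  rw [Real.log_div (ne_of_gt hx) (by positivity), Real.log_exp] at h
  linarith

lemma arith_lemma (m n : ℕ) (hn : 3 ≤ n) (h : 2 ^ m ≤ (m + 1) ^ n) :
    (m : ℝ) ≤ 5 * n * Real.log n := by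
  have hn3 : (3:ℝ) ≤ n := by exact_mod_cast hn
  have hlogn : 0 < Real.log n := Real.log_pos (by linarith)
  rcases Nat.eq_zero_or_pos m with rfl | hm
  · simp; positivity
  have hm1 : (1:ℝ) ≤ m := by exact_mod_cast hm
  have hlogs : (m : ℝ) * Real.log 2 ≤ n * Real.log (m + 1) := by
    have := Real.log_le_log (by positivity) (show ((2:ℝ))^m ≤ ((m:ℝ)+1)^n by exact_mod_cast h)
    rwa [Real.log_pow, Real.log_pow] at this
  have he : (2.7182818283 : ℝ) < Real.exp 1 := Real.exp_one_gt_d9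
  have hl2 : (0.6931471803 : ℝ) < Real.log 2 := Real.log_two_gt_d9
  have hsplit : Real.log ((m:ℝ) + 1) ≤ 2 * Real.log n + ((m:ℝ)+1) / (Real.exp 1 * n^2) := by
    have h1 : Real.log ((m:ℝ)+1) = Real.log ((n:ℝ)^2) + Real.log (((m:ℝ)+1)/ (n:ℝ)^2) := by
      rw [← Real.log_mul (by positivity) (by positivity)]
      congr 1; field_simp
    rw [h1, Real.log_pow]
    have h2 := log_le_div_e (x := ((m:ℝ)+1)/(n:ℝ)^2) (by positivity)
    rw [div_div, mul_comm ((n:ℝ)^2)] at h2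
    push_cast
    linarith
  have key : (m:ℝ) * Real.log 2 ≤ 2 * n * Real.log n + ((m:ℝ)+1) / (Real.exp 1 * 3) := by
    have hn0 : (0:ℝ) < n := by linarith
    have heq : (n:ℝ) * (((m:ℝ)+1) / (Real.exp 1 * (n:ℝ)^2)) = ((m:ℝ)+1)/(Real.exp 1 * n) := by
      field_simp
    have hle : ((m:ℝ)+1)/(Real.exp 1 * n) ≤ ((m:ℝ)+1)/(Real.exp 1 * 3) := by
      gcongr
    nlinarith
  have h2m : ((m:ℝ)+1) / (Real.exp 1 * 3) ≤ 2*(m:ℝ) / (Real.exp 1 * 3) := by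
    gcongr; linarith
  have hcoef : (2:ℝ)/5 < Real.log 2 - 2 / (Real.exp 1 * 3) := by
    have : 2 / (Real.exp 1 * 3) < 0.247 := by
      rw [div_lt_iff₀ (by positivity)]; nlinarith
    linarith
  have hdiv : 2*(m:ℝ) / (Real.exp 1 * 3) = (m:ℝ) * (2 / (Real.exp 1 * 3)) := by ring
  nlinarith [mul_le_mul_of_nonneg_left (le_of_lt hcoef) (by linarith : (0:ℝ) ≤ (m:ℝ))]
lemma sum_pow_le (m d : ℕ) : ∑ k ∈ Finset.Iic d, m ^ k ≤ (m + 1) ^ d := by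
  have hIic : ∀ n : ℕ, Finset.Iic n = Finset.range (n+1) := by
    intro n; ext k; simp [Nat.lt_succ_iff]
  rw [hIic]
  induction d with
  | zero => simp
  | succ d ih =>
    rw [Finset.sum_range_succ]
    have h1 : m ^ (d+1) ≤ m * (m+1)^d :=
      (pow_succ' m d).le.trans (Nat.mul_le_mul_left m (Nat.pow_le_pow_left (Nat.le_succ m) d))
    calc ∑ k ∈ Finset.range (d+1), m ^ k + m ^ (d+1) ≤ (m+1)^d + m * (m+1)^d :=
          Nat.add_le_add ih h1
      _ = (m+1)^(d+1) := by ring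

set_option maxHeartbeats 1000000 in
lemma count_bound {X : Type u} (H : Set (X → ℝ))
    (hpm : ∀ h ∈ H, ∀ z, h z = 1 ∨ h z = -1)
    (d T : ℕ)
    (hd : ∀ S : Finset X, Shatters H S → S.card ≤ d)
    (S : Finset X)
    (hS : ∀ ℓ : X → ℝ, (∀ a ∈ S, ℓ a = 1 ∨ ℓ a = -1) →
      ∃ h : Fin T → (X → ℝ), (∀ i, h i ∈ H) ∧
        ∀ a ∈ S, (if 0 ≤ ∑ i, h i a then (1:ℝ) else -1) = ℓ a) :
    2 ^ S.card ≤ ((S.card + 1) ^ d) ^ T := by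
  classical
  set m := S.card with hm
  set 𝒜 : Finset (Finset ↥S) :=
    Finset.univ.filter (fun B : Finset ↥S => ∃ h ∈ H, ∀ a : ↥S, (h a.1 = 1 ↔ a ∈ B)) with h𝒜
  -- VC dimension bound
  have hvc : 𝒜.vcDim ≤ d := by
    apply Finset.sup_le
    intro s hs
    rw [Finset.mem_shatterer] at hs
    have hsh : Shatters H (s.image Subtype.val) := by
      intro ℓ hℓ
      obtain ⟨u, hu, hsu⟩ := hs (Finset.filter_subset (fun a => ℓ a.1 = 1) s)
      rw [h𝒜, Finset.mem_filter] at hu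
      obtain ⟨-, h, hH, hh⟩ := hu
      refine ⟨h, hH, ?_⟩
      intro a ha
      obtain ⟨b, hb, rfl⟩ := Finset.mem_image.1 ha
      rcases hℓ b.1 ha with h1 | h1
      · have : b ∈ s ∩ u := hsu ▸ Finset.mem_filter.2 ⟨hb, h1⟩
        rw [(hh b).2 (Finset.mem_inter.1 this).2, h1]
      · have hbu : b ∉ u := by
          intro hbu
          have : b ∈ Finset.filter (fun a => ℓ a.1 = 1) s := hsu ▸ Finset.mem_inter.2 ⟨hb, hbu⟩
          have := (Finset.mem_filter.1 this).2
          rw [this] at h1; norm_num at h1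
        rcases hpm h hH b.1 with h2 | h2
        · exact absurd ((hh b).1 h2) hbu
        · rw [h2, h1]
    have := hd _ hsh
    rwa [Finset.card_image_of_injective _ Subtype.val_injective] at this
  -- Sauer-Shelah
  have hcard𝒜 : 𝒜.card ≤ (m + 1) ^ d := by
    calc 𝒜.card ≤ 𝒜.shatterer.card := Finset.card_le_card_shatterer 𝒜
      _ ≤ ∑ k ∈ Finset.Iic 𝒜.vcDim, (Fintype.card ↥S).choose k :=
          Finset.card_shatterer_le_sum_vcDim
      _ ≤ ∑ k ∈ Finset.Iic d, (Fintype.card ↥S).choose k :=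
          Finset.sum_le_sum_of_subset (Finset.Iic_subset_Iic.2 hvc)
      _ ≤ ∑ k ∈ Finset.Iic d, m ^ k := by
          refine Finset.sum_le_sum fun k _ => ?_
          rw [Fintype.card_coe]
          exact Nat.choose_le_pow m k
      _ ≤ (m + 1) ^ d := sum_pow_le m d
  -- the injection
  have hlab : ∀ B : Finset ↥S, ∀ a ∈ S,
      (fun x => if x ∈ B.image Subtype.val then (1:ℝ) else -1) a = 1 ∨
      (fun x => if x ∈ B.image Subtype.val then (1:ℝ) else -1) a = -1 := by
    intro B a _
    by_cases h : a ∈ B.image Subtype.val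
    · left; simp [h]
    · right; simp [h]
  choose F hF1 hF2 using fun B : Finset ↥S =>
    hS (fun x => if x ∈ B.image Subtype.val then (1:ℝ) else -1) (hlab B)
  have hmem : ∀ (B : Finset ↥S) (i : Fin T),
      (Finset.univ.filter (fun a : ↥S => F B i a.1 = 1)) ∈ 𝒜 := by
    intro B i
    rw [h𝒜, Finset.mem_filter]
    exact ⟨Finset.mem_univ _, F B i, hF1 B i, fun a => by simp⟩
  have hinj : Function.Injective
      (fun (B : Finset ↥S) (i : Fin T) =>
        (⟨Finset.univ.filter (fun a : ↥S => F B i a.1 = 1), hmem B i⟩ : {u : Finset ↥S // u ∈ 𝒜})) := by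
    intro B B' hBB'
    have hval : ∀ (i : Fin T) (a : ↥S), F B i a.1 = F B' i a.1 := by
      intro i a
      have hset : (Finset.univ.filter (fun a : ↥S => F B i a.1 = 1)) =
          (Finset.univ.filter (fun a : ↥S => F B' i a.1 = 1)) :=
        congrArg Subtype.val (congrFun hBB' i)
      have hiff : (F B i a.1 = 1) ↔ (F B' i a.1 = 1) := by
        have := Finset.ext_iff.1 hset a
        simpa using this
      rcases hpm _ (hF1 B i) a.1 with h2 | h2 <;> rcases hpm _ (hF1 B' i) a.1 with h3 | h3
      · rw [h2, h3]
      · exfalso; have := hiff.1 h2; rw [h3] at this; norm_num at this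
      · exfalso; have := hiff.2 h3; rw [h2] at this; norm_num at this
      · rw [h2, h3]
    have hℓ : ∀ a : ↥S,
        (if a.1 ∈ B.image Subtype.val then (1:ℝ) else -1) =
        (if a.1 ∈ B'.image Subtype.val then (1:ℝ) else -1) := by
      intro a
      have e1 := hF2 B a.1 a.2
      have e2 := hF2 B' a.1 a.2
      have hsum : ∑ i, F B i a.1 = ∑ i, F B' i a.1 :=
        Finset.sum_congr rfl (fun i _ => hval i a)
      rw [← e1, ← e2, hsum]
    ext a
    have hmem1 : a.1 ∈ B.image Subtype.val ↔ a ∈ B :=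
      Subtype.val_injective.mem_finset_image
    have hmem2 : a.1 ∈ B'.image Subtype.val ↔ a ∈ B' :=
      Subtype.val_injective.mem_finset_image
    have key := hℓ a
    rw [← hmem1, ← hmem2]
    by_cases h1 : a.1 ∈ B.image Subtype.val <;> by_cases h2 : a.1 ∈ B'.image Subtype.val
    · simp [h1, h2]
    · rw [if_pos h1, if_neg h2] at key; norm_num at key
    · rw [if_neg h1, if_pos h2] at key; norm_num at key
    · simp [h1, h2]
  have hcard := Fintype.card_le_of_injective _ hinj
  rw [Fintype.card_finset, Fintype.card_fun, Fintype.card_coe, Fintype.card_coe,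
    Fintype.card_fin] at hcard
  calc 2 ^ m ≤ 𝒜.card ^ T := hcard
    _ ≤ ((m + 1) ^ d) ^ T := Nat.pow_le_pow_left hcard𝒜 T

/-- Claim 4 (Shalev-Shwartz & Ben-David, p. 109): there is a universal constant
`C > 0` such that if `H` is a class of `±1`-valued functions of VC dimension
`d ≥ 1` and `T ≥ 1` with `Td ≥ 3`, then the class
`H_strong = {sign(∑_{i=1}^T h_i) : h_1,…,h_T ∈ H}` (with `sign(0) = 1`)
has VC dimension at most `C·Td·log(Td)`. -/
theorem vcDim_sign_sum_le :
    ∃ C : ℝ, 0 < C ∧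
      ∀ (X : Type u) (H : Set (X → ℝ)),
        (∀ h ∈ H, ∀ z, h z = 1 ∨ h z = -1) →
        ∀ d T : ℕ, 1 ≤ d → 1 ≤ T → 3 ≤ T * d →
        (∃ S : Finset X, Shatters H S ∧ S.card = d) →
        (∀ S : Finset X, Shatters H S → S.card ≤ d) →
        ∀ S : Finset X,
          Shatters {g : X → ℝ | ∃ h : Fin T → (X → ℝ), (∀ i, h i ∈ H) ∧
              g = fun z => if 0 ≤ ∑ i, h i z then (1 : ℝ) else -1} S →
          (S.card : ℝ) ≤ C * (T * d) * Real.log (T * d) := by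
  refine ⟨5, by norm_num, ?_⟩
  intro X H hpm d T hd1 hT1 hTd hexists hdmax S hSstrong
  have hS : ∀ ℓ : X → ℝ, (∀ a ∈ S, ℓ a = 1 ∨ ℓ a = -1) →
      ∃ h : Fin T → (X → ℝ), (∀ i, h i ∈ H) ∧
        ∀ a ∈ S, (if 0 ≤ ∑ i, h i a then (1:ℝ) else -1) = ℓ a := by
    intro ℓ hℓ
    obtain ⟨g, ⟨h, hhH, hg⟩, hgℓ⟩ := hSstrong ℓ hℓ
    exact ⟨h, hhH, fun a ha => by rw [← hgℓ a ha, hg]⟩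
  have hcount := count_bound H hpm d T hdmax S hS
  have hnat : 2 ^ S.card ≤ (S.card + 1) ^ (T * d) := by
    rwa [← pow_mul, Nat.mul_comm d T] at hcount
  have := arith_lemma S.card (T * d) hTd hnat
  push_cast at this ⊢
  linarith
end

section
/- Let X be a measurable space, D a probability measure on X, f : X → {−1,1} a measurable target function, and H a countable class of measurable functions h : X → {−1,1} whose VC dimension is a finite number d ≥ 1. Let η > 0 and m ≥ d. Draw a sample S = (x_1,…,x_m) i.i.d. according to D, and label y_i = f(x_i). Then the probability (over S ∼ D^m) that there exists h ∈ H with err(h,f,D) > êrr(h,S) + η is at most 8·(e·m/d)^d · exp(−m·η²/32). -/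
open MeasureTheory

/-!
Symmetrization. If some error set `E` is hit by the sample at least `mη` times less often than
`m · D(E)`, then by Hoeffding's inequality (once `mη² ≥ 2`) an independent ghost sample hits `E`
at least `mη/2` times more often than the sample with probability at least `1/2`; so the bad event
costs at most twice the probability of this two-sample event. The law of the double sample is
invariant under swapping the two points of any pair, so it suffices to count, for a fixed double
sample, the swap patterns `ε ∈ {0,1}^m` realising the event. The class has at most
`∑_{k ≤ d} (2m choose k)` traces on the `2m` points (Sauer–Shelah), and for each trace the count
difference is a Rademacher sum with coefficients in `[-1, 1]`, which reaches `mη/2` for at most a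
fraction `exp(-mη²/8)` of the patterns. The stated constant follows from
`∑_{k ≤ d} (n choose k) ≤ (en/d)^d`: when the right-hand side is below `1`, `mη² > 32(d + 2)`,
which absorbs the remaining factor `2^(d+1)`.
-/

-- `Finset` is opened only inside this section: outside it, `Shatters` would be ambiguous with
-- `Finset.Shatters`.
section UniformConvergence

open ProbabilityTheory Finset Real
open scoped ENNReal NNReal

variable {X ι : Type*}

section Traces

variable [Fintype ι]

open Classical in
noncomputable def hits (ω : ι → X) (E : Set X) : Finset ι := {i | ω i ∈ E}

open Classical in
noncomputable def traces (ω : ι → X) (C : Set (Set X)) : Finset (Finset ι) :=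
  {s | ∃ E ∈ C, hits ω E = s}

@[simp] lemma mem_hits {ω : ι → X} {E : Set X} {i : ι} : i ∈ hits ω E ↔ ω i ∈ E := by
  simp [hits]

@[simp] lemma mem_traces {ω : ι → X} {C : Set (Set X)} {s : Finset ι} :
    s ∈ traces ω C ↔ ∃ E ∈ C, hits ω E = s := by
  simp [traces]

lemma card_hits_eq_sum_indicator (ω : ι → X) (E : Set X) :
    (#(hits ω E) : ℝ) = ∑ i, E.indicator 1 (ω i) := by
  classical
  rw [hits, card_filter]
  push_cast
  simp [Set.indicator_apply]

def SetClassShatters (C : Set (Set X)) (S : Finset X) : Prop :=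
  ∀ T ⊆ S, ∃ E ∈ C, ∀ x ∈ S, x ∈ E ↔ x ∈ T

variable {ω : ι → X} {C : Set (Set X)} {s : Finset ι}

lemma injOn_of_shatters_traces [DecidableEq ι] (hs : (traces ω C).Shatters s) :
    Set.InjOn ω s := by
  intro i hi j hj hij
  obtain ⟨u, hu, hsu⟩ := hs.exists_inter_eq_singleton hi
  obtain ⟨E, -, rfl⟩ := mem_traces.mp hu
  have hiE : ω i ∈ E := mem_hits.mp (mem_inter.mp (hsu ▸ mem_singleton_self i)).2
  have hj' : j ∈ s ∩ hits ω E := mem_inter.mpr ⟨hj, mem_hits.mpr (hij ▸ hiE)⟩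
  rw [hsu, mem_singleton] at hj'
  exact hj'.symm

lemma setClassShatters_image_of_shatters_traces [DecidableEq ι] [DecidableEq X]
    (hs : (traces ω C).Shatters s) : SetClassShatters C (s.image ω) := by
  intro T hT
  obtain ⟨u, hu, hsu⟩ := hs (filter_subset (fun i => ω i ∈ T) s)
  obtain ⟨E, hE, rfl⟩ := mem_traces.mp hu
  refine ⟨E, hE, ?_⟩
  simp only [mem_image, forall_exists_index, and_imp]
  rintro _ i hi rfl
  have := congrArg (i ∈ ·) hsu
  simpa [hi] using this

lemma card_traces_le {d : ℕ} (hC : ∀ S, SetClassShatters C S → #S ≤ d) :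
    #(traces ω C) ≤ ∑ k ∈ Iic d, (Fintype.card ι).choose k := by
  classical
  have hvc : (traces ω C).vcDim ≤ d := Finset.sup_le fun s hs => by
    replace hs := mem_shatterer.mp hs
    rw [← card_image_of_injOn (injOn_of_shatters_traces hs)]
    exact hC _ (setClassShatters_image_of_shatters_traces hs)
  calc #(traces ω C) ≤ #(traces ω C).shatterer := card_le_card_shatterer _
    _ ≤ ∑ k ∈ Iic (traces ω C).vcDim, (Fintype.card ι).choose k :=
        card_shatterer_le_sum_vcDim
    _ ≤ ∑ k ∈ Iic d, (Fintype.card ι).choose k :=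
        sum_le_sum_of_subset (Iic_subset_Iic.mpr hvc)

end Traces

section SignedSums

variable [Fintype ι] [DecidableEq ι]

lemma sum_exp_mul_signedSum (c : ι → ℝ) (l : ℝ) :
    ∑ ε : ι → Bool, exp (l * ∑ i, if ε i then c i else -c i) = ∏ i, 2 * cosh (l * c i) := by
  calc ∑ ε : ι → Bool, exp (l * ∑ i, if ε i then c i else -c i)
      = ∑ ε : ι → Bool, ∏ i, exp (l * if ε i then c i else -c i) := by
        simp only [mul_sum, exp_sum]
    _ = ∏ i, ∑ b : Bool, exp (l * if b then c i else -c i) :=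
        (Fintype.prod_sum fun i (b : Bool) => exp (l * if b then c i else -c i)).symm
    _ = ∏ i, 2 * cosh (l * c i) := prod_congr rfl fun i _ => by
        simp [cosh_eq]
        ring

lemma card_signedSum_ge_le {c : ι → ℝ} (hc : ∀ i, |c i| ≤ 1) {t : ℝ} (ht : 0 ≤ t) :
    (#{ε : ι → Bool | t ≤ ∑ i, if ε i then c i else -c i} : ℝ)
      ≤ 2 ^ Fintype.card ι * exp (-t ^ 2 / (2 * Fintype.card ι)) := by
  set n : ℝ := (Fintype.card ι : ℝ)
  set l := t / n
  have hl : 0 ≤ l := by positivity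
  have hcosh : ∀ i, 2 * cosh (l * c i) ≤ 2 * exp (l ^ 2 / 2) := fun i => by
    have hc2 : c i ^ 2 ≤ 1 := by rw [← sq_abs]; exact pow_le_one₀ (abs_nonneg _) (hc i)
    grw [cosh_le_exp_half_sq, mul_pow, mul_le_of_le_one_right (sq_nonneg l) hc2]
  have hmarkov : (#{ε : ι → Bool | t ≤ ∑ i, if ε i then c i else -c i} : ℝ) * exp (l * t)
      ≤ ∑ ε : ι → Bool, exp (l * ∑ i, if ε i then c i else -c i) := by
    rw [← nsmul_eq_mul]
    refine (card_nsmul_le_sum _ _ _ fun ε hε => ?_).trans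
      (sum_le_sum_of_subset_of_nonneg (filter_subset _ _) fun _ _ _ => (exp_pos _).le)
    exact exp_le_exp.mpr (mul_le_mul_of_nonneg_left (mem_filter.mp hε).2 hl)
  have hexp : n * (l ^ 2 / 2) - l * t = -t ^ 2 / (2 * n) := by
    simp only [l, n]
    rcases eq_or_ne (Fintype.card ι) 0 with hn | hn
    · simp [hn]
    · field_simp; ring
  rw [← hexp, exp_sub, ← mul_div_assoc, le_div_iff₀ (exp_pos _)]
  calc _ ≤ ∏ i, 2 * cosh (l * c i) := hmarkov.trans (sum_exp_mul_signedSum c l).le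
    _ ≤ ∏ _i : ι, 2 * exp (l ^ 2 / 2) :=
        prod_le_prod (fun i _ => by positivity) fun i _ => hcosh i
    _ = 2 ^ Fintype.card ι * exp (n * (l ^ 2 / 2)) := by
        rw [prod_const, mul_pow, ← exp_nat_mul, card_univ]

end SignedSums

section Sampling

variable [MeasurableSpace X] [Fintype ι] {E : Set X}

lemma measurable_card_hits (hE : MeasurableSet E) :
    Measurable fun ω : ι → X => (#(hits ω E) : ℝ) := by
  simp_rw [card_hits_eq_sum_indicator]
  exact Finset.measurable_sum _ fun i _ =>
    (measurable_one.indicator hE).comp (measurable_pi_apply i)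

lemma measureReal_card_hits_add_le (D : Measure X) [IsProbabilityMeasure D]
    (hE : MeasurableSet E) {t : ℝ} (ht : 0 ≤ t) :
    (Measure.pi fun _ : ι => D).real
        {ω | (#(hits ω E) : ℝ) + t ≤ Fintype.card ι * D.real E}
      ≤ exp (-2 * t ^ 2 / Fintype.card ι) := by
  set g : X → ℝ := fun x => D.real E - E.indicator 1 x
  set c : ℝ≥0 := (‖(1 : ℝ) - 0‖₊ / 2) ^ 2
  have hg : HasSubgaussianMGF g c D := by
    have h := (hasSubgaussianMGF_of_mem_Icc (μ := D) (X := E.indicator 1) (a := 0) (b := 1)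
      (measurable_one.indicator hE).aemeasurable
      (ae_of_all _ fun x => by by_cases hx : x ∈ E <;> simp [hx])).neg
    rw [integral_indicator_one hE] at h
    exact h.congr (ae_of_all _ fun x => by simp [g])
  have hcoord : ∀ i, HasSubgaussianMGF (fun ω : ι → X => g (ω i)) c
      (Measure.pi fun _ : ι => D) := fun i =>
    HasSubgaussianMGF.of_map (X := g) (Y := fun ω : ι → X => ω i)
      (measurable_pi_apply i).aemeasurable (by rwa [(measurePreserving_eval _ i).map_eq])
  have hoeff := HasSubgaussianMGF.measure_sum_ge_le_of_iIndepFun (s := univ)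
    (iIndepFun_pi (X := fun _ => g) fun _ => hg.aemeasurable) (fun i _ => hcoord i) ht
  have hset : {ω : ι → X | (#(hits ω E) : ℝ) + t ≤ Fintype.card ι * D.real E}
      = {ω | t ≤ ∑ i, g (ω i)} := by
    ext ω
    simp only [Set.mem_ofPred_eq, g, sum_sub_distrib, sum_const, card_univ, nsmul_eq_mul,
      ← card_hits_eq_sum_indicator]
    constructor <;> intro h <;> linarith
  rw [hset]
  have hvar : ((∑ _i : ι, c : ℝ≥0) : ℝ) = Fintype.card ι / 4 := by
    norm_num [c, sum_const]
    ring
  refine hoeff.trans_eq (congrArg exp ?_)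
  rw [hvar, show 2 * ((Fintype.card ι : ℝ) / 4) = Fintype.card ι / 2 by ring, div_div_eq_mul_div]
  ring

end Sampling

lemma measurableSet_exists_mem {α β : Type*} [MeasurableSpace α] {C : Set β} (hC : C.Countable)
    {P : β → α → Prop} (hP : ∀ E ∈ C, MeasurableSet {x | P E x}) :
    MeasurableSet {x | ∃ E ∈ C, P E x} := by
  convert MeasurableSet.biUnion hC hP using 1
  ext; simp

lemma mul_measure_le_prod_of_le_measure_prodMk {α β : Type*} [MeasurableSpace α]
    [MeasurableSpace β] {μ : Measure α} {ν : Measure β} [SFinite ν] {A : Set α}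
    {B : Set (α × β)} (hB : MeasurableSet B) {c : ℝ≥0∞}
    (h : ∀ x ∈ A, c ≤ ν (Prod.mk x ⁻¹' B)) : c * μ A ≤ (μ.prod ν) B := by
  rw [Measure.prod_apply hB, ← setLIntegral_const]
  exact (setLIntegral_mono (measurable_measure_prodMk_left hB) h).trans
    (setLIntegral_le_lintegral _ _)

open Classical in
lemma measure_le_of_forall_card_le {α κ : Type*} [MeasurableSpace α] [Fintype κ] [Nonempty κ]
    {ν : Measure α} [IsProbabilityMeasure ν] {T : κ → α → α}
    (hT : ∀ k, MeasurePreserving (T k) ν ν) {B : Set α} (hB : MeasurableSet B) {K : ℝ≥0∞}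
    (hK : ∀ x, (#{k | T k x ∈ B} : ℝ≥0∞) ≤ Fintype.card κ * K) : ν B ≤ K := by
  have hcard : (Fintype.card κ : ℝ≥0∞) * ν B ≤ Fintype.card κ * K :=
    calc (Fintype.card κ : ℝ≥0∞) * ν B = ∑ k, ν (T k ⁻¹' B) := by
          simp [(hT _).measure_preimage hB.nullMeasurableSet]
      _ = ∫⁻ x, ∑ k, (T k ⁻¹' B).indicator 1 x ∂ν := by
          rw [lintegral_finsetSum _ fun k _ =>
            measurable_one.indicator (hB.preimage (hT k).measurable)]
          simp [lintegral_indicator_one (hB.preimage (hT _).measurable)]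
      _ = ∫⁻ x, (#{k | T k x ∈ B} : ℝ≥0∞) ∂ν := by
          congr 1; ext x
          simp [Set.indicator_apply]
      _ ≤ ∫⁻ _, (Fintype.card κ : ℝ≥0∞) * K ∂ν := lintegral_mono hK
      _ = Fintype.card κ * K := by simp
  exact (ENNReal.mul_le_mul_iff_right (by simp) (by simp)).mp hcard

section Swap

variable [Fintype ι] [DecidableEq ι]

def swapAt (ε : ι → Bool) (ζ : ι → X × X) : ι → X × X :=
  fun i => if ε i then (ζ i).swap else ζ i

def doubleSample (ζ : ι → X × X) : ι × Bool → X :=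
  fun q => if q.2 then (ζ q.1).2 else (ζ q.1).1

-- For `s` the trace of `E` on `doubleSample ζ`, this is `1_E (ζ i).1 - 1_E (ζ i).2`.
def patternGap (s : Finset (ι × Bool)) (i : ι) : ℝ :=
  (if (i, false) ∈ s then 1 else 0) - (if (i, true) ∈ s then 1 else 0)

def gapEvent (C : Set (Set X)) (t : ℝ) : Set (ι → X × X) :=
  {ζ | ∃ E ∈ C, (#(hits (fun i => (ζ i).1) E) : ℝ) + t < #(hits (fun i => (ζ i).2) E)}

omit [Fintype ι] in
lemma abs_patternGap_le_one (s : Finset (ι × Bool)) (i : ι) : |patternGap s i| ≤ 1 := by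
  unfold patternGap
  split_ifs <;> norm_num

lemma card_hits_snd_sub_card_hits_fst_swapAt (ε : ι → Bool) (ζ : ι → X × X) (E : Set X) :
    (#(hits (fun i => (swapAt ε ζ i).2) E) : ℝ) - #(hits (fun i => (swapAt ε ζ i).1) E)
      = ∑ i, if ε i then patternGap (hits (doubleSample ζ) E) i
          else -patternGap (hits (doubleSample ζ) E) i := by
  classical
  simp only [card_hits_eq_sum_indicator, ← sum_sub_distrib]
  refine sum_congr rfl fun i _ => ?_
  by_cases h : ε i <;> simp [h, swapAt, patternGap, doubleSample, Set.indicator_apply]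

open Classical in
lemma card_swapAt_mem_gapEvent_le (C : Set (Set X)) (ζ : ι → X × X) {t : ℝ} (ht : 0 ≤ t) :
    (#{ε | swapAt ε ζ ∈ gapEvent C t} : ℝ)
      ≤ #(traces (doubleSample ζ) C)
          * (2 ^ Fintype.card ι * exp (-t ^ 2 / (2 * Fintype.card ι))) := by
  set signedSumGe := fun s : Finset (ι × Bool) =>
    ({ε | t ≤ ∑ i, if ε i then patternGap s i else -patternGap s i} : Finset (ι → Bool))
  have hsub : ({ε | swapAt ε ζ ∈ gapEvent C t} : Finset (ι → Bool))
      ⊆ (traces (doubleSample ζ) C).biUnion signedSumGe := by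
    intro ε hε
    obtain ⟨E, hE, hlt⟩ := (mem_filter.mp hε).2
    refine mem_biUnion.mpr ⟨_, mem_traces.mpr ⟨E, hE, rfl⟩, mem_filter.mpr ⟨mem_univ _, ?_⟩⟩
    rw [← card_hits_snd_sub_card_hits_fst_swapAt]
    linarith
  calc (#{ε | swapAt ε ζ ∈ gapEvent C t} : ℝ)
      ≤ ∑ s ∈ traces (doubleSample ζ) C, (#(signedSumGe s) : ℝ) := by
        exact_mod_cast (card_le_card hsub).trans card_biUnion_le
    _ ≤ ∑ _s ∈ traces (doubleSample ζ) C,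
          2 ^ Fintype.card ι * exp (-t ^ 2 / (2 * Fintype.card ι)) :=
        sum_le_sum fun s _ => card_signedSum_ge_le (abs_patternGap_le_one s) ht
    _ = _ := by rw [sum_const, nsmul_eq_mul]

omit [DecidableEq ι] in
lemma measure_gapEvent_le [MeasurableSpace X] (D : Measure X) [IsProbabilityMeasure D]
    {C : Set (Set X)} (hC : C.Countable) (hCm : ∀ E ∈ C, MeasurableSet E) {N : ℕ}
    (hN : ∀ ω : ι × Bool → X, #(traces ω C) ≤ N) {t : ℝ} (ht : 0 ≤ t) :
    (Measure.pi fun _ : ι => D.prod D) (gapEvent C t)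
      ≤ ENNReal.ofReal (N * exp (-t ^ 2 / (2 * Fintype.card ι))) := by
  classical
  have hB : MeasurableSet (gapEvent C t : Set (ι → X × X)) :=
    measurableSet_exists_mem hC fun E hE => measurableSet_lt
      (((measurable_card_hits (hCm E hE)).comp (by fun_prop)).add_const _)
      ((measurable_card_hits (hCm E hE)).comp (by fun_prop))
  refine measure_le_of_forall_card_le (T := swapAt) (fun ε => ?_) hB fun ζ => ?_
  · refine measurePreserving_pi (f := fun i (p : X × X) => if ε i then p.swap else p) _ _
      fun i => ?_
    by_cases h : ε i
    · simpa [h] using Measure.measurePreserving_swap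
    · simp only [h]
      exact MeasurePreserving.id _
  · have hcount := (card_swapAt_mem_gapEvent_le C ζ ht).trans
      (mul_le_mul_of_nonneg_right (Nat.cast_le.mpr (hN (doubleSample ζ))) (by positivity))
    rw [← ENNReal.ofReal_natCast]
    refine (ENNReal.ofReal_le_ofReal hcount).trans_eq ?_
    rw [mul_left_comm, ENNReal.ofReal_mul (by positivity)]
    simp

end Swap

section Numerics

lemma sum_choose_le_exp_one_mul_div_pow {d n : ℕ} (hdn : d ≤ n) :
    ∑ k ∈ Iic d, (n.choose k : ℝ) ≤ (exp 1 * n / d) ^ d := by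
  rcases Nat.eq_zero_or_pos d with rfl | hd
  · simp [Iic_eq_Icc]
  have hn : (0 : ℝ) < n := by exact_mod_cast hd.trans_le hdn
  set r : ℝ := d / n
  have hr0 : 0 < r := by positivity
  have hr1 : r ≤ 1 := div_le_one_of_le₀ (by exact_mod_cast hdn) hn.le
  have hbinom : r ^ d * ∑ k ∈ Iic d, (n.choose k : ℝ) ≤ exp d :=
    calc r ^ d * ∑ k ∈ Iic d, (n.choose k : ℝ)
        ≤ ∑ k ∈ Iic d, r ^ k * 1 ^ (n - k) * n.choose k := by
          rw [mul_sum]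
          gcongr with k hk
          rw [one_pow, mul_one]
          exact pow_le_pow_of_le_one hr0.le hr1 (mem_Iic.mp hk)
      _ ≤ ∑ k ∈ range (n + 1), r ^ k * 1 ^ (n - k) * n.choose k :=
          sum_le_sum_of_subset_of_nonneg (fun k hk => by simp at hk ⊢; omega)
            fun _ _ _ => by positivity
      _ = (r + 1) ^ n := (add_pow r 1 n).symm
      _ ≤ exp r ^ n := by gcongr; exact add_one_le_exp r
      _ = exp d := by rw [← exp_nat_mul]; congr 1; simp only [r]; field_simp
  calc ∑ k ∈ Iic d, (n.choose k : ℝ) ≤ exp d / r ^ d := by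
        rw [le_div_iff₀ (by positivity)]; linarith
    _ = (exp 1 * n / d) ^ d := by
        rw [← exp_one_pow, ← div_pow]; congr 1; simp only [r]; field_simp

lemma exp_le_exp_one_mul_div_pow {d m : ℕ} (hdm : d ≤ m) : exp d ≤ (exp 1 * m / d) ^ d := by
  rcases Nat.eq_zero_or_pos d with rfl | hd
  · simp
  rw [← exp_one_pow, mul_div_assoc]
  gcongr
  exact le_mul_of_one_le_right (exp_pos 1).le
    ((one_le_div (by positivity)).mpr (by exact_mod_cast hdm))

lemma lt_of_eight_mul_pow_mul_exp_lt_one {d m : ℕ} (hdm : d ≤ m) {x : ℝ}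
    (h : 8 * (exp 1 * m / d) ^ d * exp (-x / 32) < 1) : 32 * (d + 2) < x := by
  by_contra! hx
  have hexp2 : exp 2 < 8 := by
    have := exp_one_lt_d9
    rw [show (2 : ℝ) = 1 + 1 by norm_num, exp_add]
    nlinarith [exp_pos 1]
  have hge : 1 ≤ 8 * exp (d + -x / 32) :=
    calc (1 : ℝ) = exp 2 * exp (-2) := by rw [← exp_add]; norm_num
      _ ≤ 8 * exp (d + -x / 32) := by
        gcongr
        linarith
  rw [exp_add, ← mul_assoc] at hge
  have := mul_le_mul_of_nonneg_right (mul_le_mul_of_nonneg_left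
    (exp_le_exp_one_mul_div_pow hdm) (by norm_num : (0 : ℝ) ≤ 8)) (exp_pos (-x / 32)).le
  linarith

lemma two_mul_sum_choose_mul_exp_le {d m : ℕ} (hdm : d ≤ m) {x : ℝ} (hx : 32 * (d + 2) < x) :
    2 * (∑ k ∈ Iic d, ((2 * m).choose k : ℝ)) * exp (-x / 8)
      ≤ 8 * (exp 1 * m / d) ^ d * exp (-x / 32) := by
  have hsum : ∑ k ∈ Iic d, ((2 * m).choose k : ℝ) ≤ 2 ^ d * (exp 1 * m / d) ^ d := by
    refine (sum_choose_le_exp_one_mul_div_pow (by omega)).trans_eq ?_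
    rw [← mul_pow]; push_cast; ring
  have hpow : (2 : ℝ) ^ (d + 1) * exp (-x / 8) ≤ 8 * exp (-x / 32) :=
    calc (2 : ℝ) ^ (d + 1) * exp (-x / 8) ≤ exp 1 ^ (d + 1) * exp (-x / 8) := by
          gcongr; linarith [add_one_le_exp 1]
      _ ≤ 1 * exp (-x / 32) := by
          rw [exp_one_pow, ← exp_add, one_mul]
          gcongr
          push_cast
          linarith
      _ ≤ 8 * exp (-x / 32) := by gcongr; norm_num
  calc 2 * (∑ k ∈ Iic d, ((2 * m).choose k : ℝ)) * exp (-x / 8)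
      ≤ 2 * (2 ^ d * (exp 1 * m / d) ^ d) * exp (-x / 8) := by gcongr
    _ = (exp 1 * m / d) ^ d * (2 ^ (d + 1) * exp (-x / 8)) := by ring
    _ ≤ (exp 1 * m / d) ^ d * (8 * exp (-x / 32)) := by gcongr
    _ = 8 * (exp 1 * m / d) ^ d * exp (-x / 32) := by ring

end Numerics

section Symmetrization

variable [MeasurableSpace X] [Fintype ι] [Nonempty ι]
  (D : Measure X) [IsProbabilityMeasure D]

lemma inv_two_le_measure_lt_card_hits_add {E : Set X} (hE : MeasurableSet E) {t : ℝ}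
    (ht : 0 ≤ t) (hnt : Fintype.card ι ≤ 2 * t ^ 2) :
    2⁻¹ ≤ (Measure.pi fun _ : ι => D) {ω | Fintype.card ι * D.real E < #(hits ω E) + t} := by
  set S := {ω : ι → X | (#(hits ω E) : ℝ) + t ≤ Fintype.card ι * D.real E}
  have hS : MeasurableSet S :=
    measurableSet_le ((measurable_card_hits hE).add_const t) measurable_const
  have hexp : exp (-2 * t ^ 2 / Fintype.card ι) ≤ 2⁻¹ :=
    calc exp (-2 * t ^ 2 / Fintype.card ι) ≤ exp (-1) := by
          gcongr
          rw [div_le_iff₀ (by positivity)]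
          linarith
      _ ≤ 2⁻¹ := by
          rw [exp_neg]
          gcongr
          linarith [add_one_le_exp 1]
  have hSle : (Measure.pi fun _ : ι => D) S ≤ 2⁻¹ := by
    rw [← ofReal_measureReal]
    refine (ENNReal.ofReal_le_ofReal
      ((measureReal_card_hits_add_le D hE ht).trans hexp)).trans_eq ?_
    rw [ENNReal.ofReal_inv_of_pos two_pos, ENNReal.ofReal_ofNat]
  have hcompl : {ω | Fintype.card ι * D.real E < #(hits ω E) + t} = Sᶜ := by
    ext ω; simp [S]
  rw [hcompl, prob_compl_eq_one_sub hS]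
  calc (2⁻¹ : ℝ≥0∞) = 1 - 2⁻¹ := ENNReal.one_sub_inv_two.symm
    _ ≤ 1 - (Measure.pi fun _ : ι => D) S := by gcongr

lemma measure_exists_lt_le_two_mul_measure_gapEvent {C : Set (Set X)} (hC : C.Countable)
    (hCm : ∀ E ∈ C, MeasurableSet E) {η : ℝ} (hη : 0 ≤ η) (hnη : 2 ≤ Fintype.card ι * η ^ 2) :
    (Measure.pi fun _ : ι => D)
        {ω | ∃ E ∈ C, (#(hits ω E) : ℝ) / Fintype.card ι + η < D.real E}
      ≤ 2 * (Measure.pi fun _ : ι => D.prod D) (gapEvent C (Fintype.card ι * η / 2)) := by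
  set n : ℝ := (Fintype.card ι : ℝ)
  set μ := Measure.pi fun _ : ι => D
  have hn : 0 < n := by positivity
  set B :=
    {p : (ι → X) × (ι → X) | ∃ E ∈ C, (#(hits p.1 E) : ℝ) + n * η / 2 < #(hits p.2 E)}
  have hB : MeasurableSet B :=
    measurableSet_exists_mem hC fun E hE => measurableSet_lt
      (((measurable_card_hits (hCm E hE)).comp measurable_fst).add_const _)
      ((measurable_card_hits (hCm E hE)).comp measurable_snd)
  have hghost : ∀ ω ∈ {ω | ∃ E ∈ C, (#(hits ω E) : ℝ) / n + η < D.real E},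
      2⁻¹ ≤ μ (Prod.mk ω ⁻¹' B) := by
    rintro ω ⟨E, hE, hlt⟩
    refine (inv_two_le_measure_lt_card_hits_add D (hCm E hE) (t := n * η / 2) (by positivity)
      (by nlinarith)).trans (measure_mono fun ω' hω' => ⟨E, hE, ?_⟩)
    rw [div_add' _ _ _ hn.ne', div_lt_iff₀ hn] at hlt
    simp only [Set.mem_ofPred_eq] at hω'
    linarith
  have hsym := mul_measure_le_prod_of_le_measure_prodMk (μ := μ) hB hghost
  rw [← (measurePreserving_arrowProdEquivProdArrow X X ι _ _).measure_preimage
    hB.nullMeasurableSet] at hsym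
  calc _ = 2 * (2⁻¹ * μ {ω | ∃ E ∈ C, (#(hits ω E) : ℝ) / n + η < D.real E}) := by
        rw [← mul_assoc, ENNReal.mul_inv_cancel two_ne_zero ENNReal.ofNat_ne_top, one_mul]
    _ ≤ _ := by gcongr; exact hsym

end Symmetrization

theorem measure_exists_card_hits_div_add_lt_le [MeasurableSpace X] [Fintype ι]
    [Nonempty ι] (D : Measure X) [IsProbabilityMeasure D] {C : Set (Set X)} (hC : C.Countable)
    (hCm : ∀ E ∈ C, MeasurableSet E) {d : ℕ} (hVC : ∀ S, SetClassShatters C S → #S ≤ d) {η : ℝ}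
    (hη : 0 ≤ η) (hnη : 2 ≤ Fintype.card ι * η ^ 2) :
    (Measure.pi fun _ : ι => D)
        {ω | ∃ E ∈ C, (#(hits ω E) : ℝ) / Fintype.card ι + η < D.real E}
      ≤ ENNReal.ofReal (2 * (∑ k ∈ Iic d, ((2 * Fintype.card ι).choose k : ℝ))
          * exp (-(Fintype.card ι * η ^ 2) / 8)) := by
  have hN : ∀ ω : ι × Bool → X, #(traces ω C) ≤ ∑ k ∈ Iic d, (2 * Fintype.card ι).choose k :=
    fun ω => by simpa [Fintype.card_prod, mul_comm] using card_traces_le (ω := ω) hVC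
  refine (measure_exists_lt_le_two_mul_measure_gapEvent D hC hCm hη hnη).trans ?_
  grw [measure_gapEvent_le D hC hCm hN (by positivity)]
  rw [← ENNReal.ofReal_ofNat 2, ← ENNReal.ofReal_mul zero_le_two]
  have hn : (Fintype.card ι : ℝ) ≠ 0 := by positivity
  apply le_of_eq
  congr 1
  push_cast
  field_simp
  norm_num

end UniformConvergence

lemma shatters_of_setClassShatters_errorSets {X : Type*} {f : X → ℝ} (hf : ∀ z, f z = 1 ∨ f z = -1)
    {H : Set (X → ℝ)} (hH : ∀ h ∈ H, ∀ z, h z = 1 ∨ h z = -1) {S : Finset X}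
    (hS : SetClassShatters ((fun h => {z | h z ≠ f z}) '' H) S) : Shatters H S := by
  classical
  intro ℓ hℓ
  obtain ⟨_, ⟨h, hH', rfl⟩, hE⟩ := hS {a ∈ S | ℓ a ≠ f a} (Finset.filter_subset _ _)
  refine ⟨h, hH', fun a ha => ?_⟩
  have := hE a ha
  simp only [Set.mem_ofPred_eq, Finset.mem_filter, ha, true_and] at this
  grind [hf a, hH h hH' a, hℓ a ha]

theorem vc_uniform_convergence_general
    {X : Type*} [MeasurableSpace X] (D : Measure X) [IsProbabilityMeasure D]
    (f : X → ℝ) (hf : Measurable f) (hfval : ∀ z, f z = 1 ∨ f z = -1)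
    (H : Set (X → ℝ)) (hHcount : H.Countable)
    (hHmeas : ∀ h ∈ H, Measurable h)
    (hHval : ∀ h ∈ H, ∀ z, h z = 1 ∨ h z = -1)
    (d : ℕ)
    (hVCle : ∀ S : Finset X, Shatters H S → S.card ≤ d)
    (η : ℝ) (hη : 0 < η) (m : ℕ) (hm : d ≤ m) :
    ((Measure.pi fun _ : Fin m => D)
        {ω : Fin m → X | ∃ h ∈ H,
          (D {z | h z ≠ f z}).toReal >
            ((Finset.univ.filter fun i => h (ω i) ≠ f (ω i)).card : ℝ) / m + η}
      ).toReal
      ≤ 8 * (Real.exp 1 * m / d) ^ d * Real.exp (-(m : ℝ) * η ^ 2 / 32) := by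
  rcases le_or_gt 1 (8 * (Real.exp 1 * m / d) ^ d * Real.exp (-(m : ℝ) * η ^ 2 / 32))
    with hbound | hbound
  · exact measureReal_le_one.trans hbound
  rw [neg_mul] at hbound ⊢
  have hlarge := lt_of_eight_mul_pow_mul_exp_lt_one hm hbound
  have hm0 : (0 : ℝ) < m := by
    by_contra! h
    nlinarith [sq_nonneg η]
  have : Nonempty (Fin m) := Fin.pos_iff_nonempty.mp (by exact_mod_cast hm0)
  have key := measure_exists_card_hits_div_add_lt_le (ι := Fin m) D
    (hHcount.image fun h => {z | h z ≠ f z})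
    (by rintro _ ⟨h, hh, rfl⟩; exact (measurableSet_eq_fun (hHmeas h hh) hf).compl)
    (fun S hS => hVCle S (shatters_of_setClassShatters_errorSets hfval hHval hS)) hη.le
    (by simp only [Fintype.card_fin]; linarith)
  simp only [Fintype.card_fin, Set.exists_mem_image] at key
  refine (ENNReal.toReal_le_of_le_ofReal (by positivity) ?_).trans
    (two_mul_sum_choose_mul_exp_le hm hlarge)
  convert key using 4 with ω
  simp [hits, measureReal_def]

/-- VC uniform-convergence bound (Theorem 2.5 in Schapire–Freund): for a
countable class `H` of measurable `±1`-valued hypotheses of VC dimension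
`d ≥ 1`, a target `f`, a distribution `D`, `η > 0` and sample size `m ≥ d`, the
probability over an i.i.d. sample `S ∼ D^m` that some `h ∈ H` has
`err(h,f,D) > êrr(h,S) + η` is at most `8(em/d)^d · exp(−mη²/32)`. -/
theorem vc_uniform_convergence
    {X : Type*} [MeasurableSpace X] (D : Measure X) [IsProbabilityMeasure D]
    (f : X → ℝ) (hf : Measurable f) (hfval : ∀ z, f z = 1 ∨ f z = -1)
    (H : Set (X → ℝ)) (hHcount : H.Countable)
    (hHmeas : ∀ h ∈ H, Measurable h)
    (hHval : ∀ h ∈ H, ∀ z, h z = 1 ∨ h z = -1)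
    (d : ℕ) (hd : 1 ≤ d)
    (hVCle : ∀ S : Finset X, Shatters H S → S.card ≤ d)
    (hVCge : ∃ S : Finset X, Shatters H S ∧ S.card = d)
    (η : ℝ) (hη : 0 < η) (m : ℕ) (hm : d ≤ m) :
    ((Measure.pi fun _ : Fin m => D)
        {ω : Fin m → X | ∃ h ∈ H,
          (D {z | h z ≠ f z}).toReal >
            ((Finset.univ.filter fun i => h (ω i) ≠ f (ω i)).card : ℝ) / m + η}
      ).toReal
      ≤ 8 * (Real.exp 1 * m / d) ^ d * Real.exp (-(m : ℝ) * η ^ 2 / 32) :=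
  vc_uniform_convergence_general D f hf hfval H hHcount hHmeas hHval d hVCle η hη m hm
end
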